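/- arXiv:2506.15893 — 11 statements merged into one kernel-verified Lean document; each statement's English description precedes it below -/
import Mathlib

section
/- Let X be a countable set, let 𝒞 be a countable concept class over X, let k ∈ ℕ, and let T be an injective function mapping every concept C ∈ 𝒞 to a finite subset T(C) ⊆ X with |T(C)| ≤ k. Then there exists a contrast-set mapping CS such that the contrast sample complexity satisfies S_CS(𝒞) ≤ k + 1. -/
open scoped NNReal

/-- The interaction game for learning from a contrast oracle:
`Identifiable pt CS n V` holds iff the learner can guarantee, within at most `n` rounds,
that the version space (starting from `V`) becomes a singleton `{C*}` (i.e. a subsingleton,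
since the target always stays in the version space), against every target `C* ∈ V` and
every adversarial choice of contrastive examples from the contrast set `CS`.
A query has type `Q`; `pt q` is the instance whose label is returned; `CS q C V` is the
contrast set of the query `q` w.r.t. concept `C` and current version space `V`. -/
def Identifiable {X Q : Type*} (pt : Q → X)
    (CS : Q → (X → Bool) → Set (X → Bool) → Set X) :
    ℕ → Set (X → Bool) → Prop
  | 0, V => V.Subsingleton
  | n + 1, V =>
      V.Subsingleton ∨
        ∃ q : Q, ∀ Cstar ∈ V,
          ((CS q Cstar V = ∅ →
            Identifiable pt CS n
              {C ∈ V | C (pt q) = Cstar (pt q) ∧ CS q C V = ∅}) ∧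
          (∀ x' ∈ CS q Cstar V,
            Identifiable pt CS n
              {C ∈ V | C (pt q) = Cstar (pt q) ∧ x' ∈ CS q C V ∧ C x' = Cstar x'}))

/-- The contrast sample complexity of class `𝓒` (as an extended natural number):
the least `n` such that some learner identifies every target within `n` rounds. -/
noncomputable def sampleComplexity {X Q : Type*} (pt : Q → X)
    (CS : Q → (X → Bool) → Set (X → Bool) → Set X) (𝓒 : Set (X → Bool)) : ℕ∞ :=
  sInf {n : ℕ∞ | ∃ k : ℕ, n = (k : ℕ∞) ∧ Identifiable pt CS k 𝓒}

/-- Minimum-distance contrast set: points of opposite label at minimal `d`-distance. -/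
def CSmin {X : Type*} (d : X → X → ℝ≥0) (x : X) (C : X → Bool) : Set X :=
  {x' | C x' ≠ C x ∧ ∀ x'' : X, C x'' ≠ C x → d x x' ≤ d x x''}

/-- Sample complexity in the minimum-distance model. -/
noncomputable def Smin {X : Type*} (d : X → X → ℝ≥0) (𝓒 : Set (X → Bool)) : ℕ∞ :=
  sampleComplexity (id : X → X) (fun x C _ => CSmin d x C) 𝓒

/-- Proximity contrast set: points of opposite label within distance `r` of `x`. -/
def CSprox {X : Type*} (d : X → X → ℝ≥0) (x : X) (r : ℝ≥0) (C : X → Bool) : Set X :=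
  {x' | C x' ≠ C x ∧ d x x' ≤ r}

/-- Sample complexity in the proximity model (queries are pairs `(x, r)`). -/
noncomputable def Sprox {X : Type*} (d : X → X → ℝ≥0) (𝓒 : Set (X → Bool)) : ℕ∞ :=
  sampleComplexity (Prod.fst : X × ℝ≥0 → X) (fun q C _ => CSprox d q.1 q.2 C) 𝓒

/-- Membership-query complexity: the contrast sets are always empty,
so the oracle only ever returns the label of the queried point. -/
noncomputable def SMQ {X : Type*} (𝓒 : Set (X → Bool)) : ℕ∞ :=
  sampleComplexity (id : X → X) (fun _ _ _ => (∅ : Set X)) 𝓒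

lemma ident_of_subsingleton {X Q : Type*} (pt : Q → X)
    (CS : Q → (X → Bool) → Set (X → Bool) → Set X) (n : ℕ) {V : Set (X → Bool)}
    (h : V.Subsingleton) : Identifiable pt CS n V := by
  cases n with
  | zero => exact h
  | succ n => exact Or.inl h

lemma aux_main {X : Type*} (e : X → ℕ) (he : Function.Injective e)
    (𝓒 : Set (X → Bool)) (T : (X → Bool) → Finset X) (hinj : Set.InjOn T 𝓒) :
    ∀ b : ℕ, ∀ V : Set (X → Bool), V ⊆ 𝓒 → ∀ t : ℕ,
    (∀ C ∈ V, ∀ C' ∈ V, ∀ y : X, e y < t → (y ∈ T C ↔ y ∈ T C')) →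
    (∀ C ∈ V, ((T C).filter (fun y => t ≤ e y)).card ≤ b) →
    Identifiable (id : X → X)
      (fun x C _ => {x' | x' ∈ T C ∧ e x ≤ e x' ∧ ∀ y ∈ T C, e x ≤ e y → e x' ≤ e y})
      b V := by
  classical
  intro b
  induction b with
  | zero =>
    intro V hV𝓒 t hpre hcard
    show V.Subsingleton
    intro C hC C' hC'
    apply hinj (hV𝓒 hC) (hV𝓒 hC')
    ext y
    by_cases hy : e y < t
    · exact hpre C hC C' hC' y hy
    · push_neg at hy
      constructor
      · intro hyC
        exfalso
        have : y ∈ (T C).filter (fun y => t ≤ e y) := Finset.mem_filter.2 ⟨hyC, hy⟩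
        have h1 := Finset.card_pos.2 ⟨y, this⟩
        have h2 := hcard C hC
        omega
      · intro hyC'
        exfalso
        have : y ∈ (T C').filter (fun y => t ≤ e y) := Finset.mem_filter.2 ⟨hyC', hy⟩
        have h1 := Finset.card_pos.2 ⟨y, this⟩
        have h2 := hcard C' hC'
        omega
  | succ b ih =>
    intro V hV𝓒 t hpre hcard
    by_cases hW : ∃ y : X, (∃ C ∈ V, y ∈ T C) ∧ t ≤ e y
    · -- pick q with minimal e among such y
      have hNE : {n : ℕ | ∃ y : X, ((∃ C ∈ V, y ∈ T C) ∧ t ≤ e y) ∧ e y = n}.Nonempty := by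
        obtain ⟨y, hy⟩ := hW
        exact ⟨e y, y, hy, rfl⟩
      obtain ⟨q, hqW, hqe⟩ := Nat.sInf_mem hNE
      have hqmin : ∀ y : X, (∃ C ∈ V, y ∈ T C) → t ≤ e y → e q ≤ e y := by
        intro y h1 h2
        rw [hqe]
        exact Nat.sInf_le ⟨y, ⟨h1, h2⟩, rfl⟩
      have hqt : t ≤ e q := hqW.2
      refine Or.inr ⟨q, ?_⟩
      intro Cstar hCstar
      constructor
      · -- ω branch
        intro hempty
        apply ident_of_subsingleton
        -- every C in the new version space has T C ∩ {e ≥ t} = ∅, so they are all equal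
        have hTempty : ∀ C ∈ V,
            ({x' | x' ∈ T C ∧ e q ≤ e x' ∧ ∀ y ∈ T C, e q ≤ e y → e x' ≤ e y}
              : Set X) = ∅ →
            ∀ y ∈ T C, ¬ t ≤ e y := by
          intro C hC hCS y hyT hty
          have hqy : e q ≤ e y := hqmin y ⟨C, hC, hyT⟩ hty
          have hfNE : ((T C).filter (fun z => e q ≤ e z)).Nonempty :=
            ⟨y, Finset.mem_filter.2 ⟨hyT, hqy⟩⟩
          obtain ⟨z, hzF, hzmin⟩ := Finset.exists_min_image _ e hfNE
          have hz1 := Finset.mem_filter.1 hzF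
          have : z ∈ ({x' | x' ∈ T C ∧ e q ≤ e x' ∧
              ∀ y ∈ T C, e q ≤ e y → e x' ≤ e y} : Set X) := by
            refine ⟨hz1.1, hz1.2, ?_⟩
            intro w hwT hqw
            exact hzmin w (Finset.mem_filter.2 ⟨hwT, hqw⟩)
          rw [hCS] at this
          exact this
        intro C hC C' hC'
        obtain ⟨hCV, -, hCemp⟩ := hC
        obtain ⟨hC'V, -, hC'emp⟩ := hC'
        apply hinj (hV𝓒 hCV) (hV𝓒 hC'V)
        ext y
        by_cases hy : e y < t
        · exact hpre C hCV C' hC'V y hy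
        · push_neg at hy
          constructor
          · intro hyT; exact absurd hy (hTempty C hCV hCemp y hyT).elim
          · intro hyT; exact absurd hy (hTempty C' hC'V hC'emp y hyT).elim
      · -- contrastive example branch
        intro x' hx'
        -- key facts about members of the new version space
        set V' : Set (X → Bool) :=
          {C ∈ V | C (id q) = Cstar (id q) ∧
            x' ∈ ({x'' | x'' ∈ T C ∧ e q ≤ e x'' ∧
              ∀ y ∈ T C, e q ≤ e y → e x'' ≤ e y} : Set X) ∧ C x' = Cstar x'} with hV'
        have hmem : ∀ C ∈ V', C ∈ V ∧ x' ∈ T C ∧ e q ≤ e x' ∧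
            ∀ y ∈ T C, e q ≤ e y → e x' ≤ e y := by
          intro C hC
          exact ⟨hC.1, hC.2.2.1.1, hC.2.2.1.2.1, hC.2.2.1.2.2⟩
        have hV'V : V' ⊆ V := fun C hC => hC.1
        -- any y ∈ T C with e y ≤ e x' and t ≤ e y must be x'
        have hkey : ∀ C ∈ V', ∀ y ∈ T C, t ≤ e y → e y ≤ e x' → y = x' := by
          intro C hC y hyT hty hyx
          obtain ⟨hCV, -, -, hmin⟩ := hmem C hC
          have hqy : e q ≤ e y := hqmin y ⟨C, hCV, hyT⟩ hty
          have := hmin y hyT hqy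
          exact he (le_antisymm hyx this)
        apply ih V' (fun C hC => hV𝓒 (hV'V hC)) (e x' + 1)
        · -- prefix agreement below e x' + 1
          intro C hC C' hC' y hy
          have hdir : ∀ D ∈ V', ∀ D' ∈ V', y ∈ T D → y ∈ T D' := by
            intro D hD D' hD' hyD
            by_cases hyt : e y < t
            · exact (hpre D (hV'V hD) D' (hV'V hD') y hyt).1 hyD
            · push_neg at hyt
              have : y = x' := hkey D hD y hyD hyt (by omega)
              subst this
              exact (hmem D' hD').2.1
          exact ⟨hdir C hC C' hC', hdir C' hC' C hC⟩
        · -- card bound decreases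
          intro C hC
          obtain ⟨hCV, hx'T, hqx', hmin⟩ := hmem C hC
          have hfe : (T C).filter (fun y => e x' + 1 ≤ e y)
              = ((T C).filter (fun y => t ≤ e y)).erase x' := by
            ext y
            simp only [Finset.mem_filter, Finset.mem_erase]
            constructor
            · rintro ⟨hyT, hy⟩
              have hne : y ≠ x' := by
                intro h; rw [h] at hy; omega
              exact ⟨hne, hyT, by omega⟩
            · rintro ⟨hne, hyT, hty⟩
              refine ⟨hyT, ?_⟩
              by_contra hcon
              push_neg at hcon
              exact hne (hkey C hC y hyT hty (by omega))
          rw [hfe, Finset.card_erase_of_mem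
            (Finset.mem_filter.2 ⟨hx'T, by omega⟩)]
          have := hcard C hCV
          omega
    · -- no remaining elements above t: version space is already a subsingleton
      push_neg at hW
      apply ident_of_subsingleton
      intro C hC C' hC'
      apply hinj (hV𝓒 hC) (hV𝓒 hC')
      ext y
      by_cases hy : e y < t
      · exact hpre C hC C' hC' y hy
      · push_neg at hy
        constructor
        · intro hyT; exact absurd hy (by simpa using hW y ⟨C, hC, hyT⟩)
        · intro hyT; exact absurd hy (by simpa using hW y ⟨C', hC', hyT⟩)

/-- Let `X` be countable, `𝓒` a countable concept class over `X`,
and `T` an injective map sending each concept of `𝓒` to a finite subset of `X` of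
size at most `k`. Then there is a contrast-set mapping `CS` (depending only on the
query point and the concept) whose contrast sample complexity on `𝓒` is at most `k + 1`. -/
theorem statement0 {X : Type*} [Countable X] (𝓒 : Set (X → Bool)) (h𝓒 : 𝓒.Countable)
    (k : ℕ) (T : (X → Bool) → Finset X)
    (hinj : Set.InjOn T 𝓒) (hcard : ∀ C ∈ 𝓒, (T C).card ≤ k) :
    ∃ CS : X → (X → Bool) → Set X,
      sampleComplexity (id : X → X) (fun x C _ => CS x C) 𝓒 ≤ (k : ℕ∞) + 1 := by
  obtain ⟨e, he⟩ := Countable.exists_injective_nat X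
  refine ⟨fun x C => {x' | x' ∈ T C ∧ e x ≤ e x' ∧ ∀ y ∈ T C, e x ≤ e y → e x' ≤ e y}, ?_⟩
  have hident : Identifiable (id : X → X)
      (fun x C _ => {x' | x' ∈ T C ∧ e x ≤ e x' ∧ ∀ y ∈ T C, e x ≤ e y → e x' ≤ e y})
      k 𝓒 := by
    apply aux_main e he 𝓒 T hinj k 𝓒 le_rfl 0
    · intro C _ C' _ y hy; omega
    · intro C hC
      calc ((T C).filter (fun y => 0 ≤ e y)).card ≤ (T C).card :=
            Finset.card_filter_le _ _
        _ ≤ k := hcard C hC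
  calc sampleComplexity (id : X → X)
        (fun x C _ => {x' | x' ∈ T C ∧ e x ≤ e x' ∧
          ∀ y ∈ T C, e x ≤ e y → e x' ≤ e y}) 𝓒 ≤ (k : ℕ∞) :=
        sInf_le ⟨k, rfl, hident⟩
    _ ≤ (k : ℕ∞) + 1 := le_self_add
end

section
/- Let X be a finite set, let 𝒞 be a concept class over X, and let CS and CS' be contrast-set mappings such that for every pair (x, C) with x ∈ X and C ∈ 𝒞: (i) CS(x, C) ⊆ CS'(x, C), and (ii) CS(x, C) = ∅ implies CS'(x, C) = ∅. Then S_CS(𝒞) ≤ S_CS'(𝒞). -/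
open scoped NNReal

lemma identifiable_mono_aux {X : Type*} (𝓒 : Set (X → Bool))
    (CS CS' : X → (X → Bool) → Set X)
    (hsub : ∀ x : X, ∀ C ∈ 𝓒, CS x C ⊆ CS' x C)
    (hempty : ∀ x : X, ∀ C ∈ 𝓒, CS x C = ∅ → CS' x C = ∅) :
    ∀ n : ℕ, ∀ V V' : Set (X → Bool), V ⊆ V' → V ⊆ 𝓒 →
      Identifiable (id : X → X) (fun x C _ => CS' x C) n V' →
      Identifiable (id : X → X) (fun x C _ => CS x C) n V := by
  intro n
  induction n with
  | zero => intro V V' hVV' _ h; exact h.anti hVV'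
  | succ n ih =>
    intro V V' hVV' hVC h
    rcases h with h | ⟨q, hq⟩
    · exact Or.inl (h.anti hVV')
    · right
      refine ⟨q, fun Cstar hC => ?_⟩
      obtain ⟨h1, h2⟩ := hq Cstar (hVV' hC)
      constructor
      · intro he
        have he' : CS' q Cstar = ∅ := hempty q Cstar (hVC hC) he
        refine ih _ _ ?_ ?_ (h1 he')
        · rintro C ⟨hCV, hlab, hcs⟩
          exact ⟨hVV' hCV, hlab, hempty q C (hVC hCV) hcs⟩
        · rintro C ⟨hCV, -⟩; exact hVC hCV
      · intro x' hx'
        have hx'' : x' ∈ CS' q Cstar := hsub q Cstar (hVC hC) hx'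
        refine ih _ _ ?_ ?_ (h2 x' hx'')
        · rintro C ⟨hCV, hlab, hmem, hval⟩
          exact ⟨hVV' hCV, hlab, hsub q C (hVC hCV) hmem, hval⟩
        · rintro C ⟨hCV, -⟩; exact hVC hCV

/-- Over a finite domain, if `CS x C ⊆ CS' x C` for all `x` and all
`C ∈ 𝓒`, and `CS x C = ∅` implies `CS' x C = ∅`, then the contrast sample complexity
with `CS` is at most that with `CS'`. -/
theorem statement1 {X : Type*} [Fintype X] (𝓒 : Set (X → Bool))
    (CS CS' : X → (X → Bool) → Set X)
    (hsub : ∀ x : X, ∀ C ∈ 𝓒, CS x C ⊆ CS' x C)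
    (hempty : ∀ x : X, ∀ C ∈ 𝓒, CS x C = ∅ → CS' x C = ∅) :
    sampleComplexity (id : X → X) (fun x C _ => CS x C) 𝓒 ≤
      sampleComplexity (id : X → X) (fun x C _ => CS' x C) 𝓒 := by
  apply sInf_le_sInf
  rintro n ⟨k, rfl, hk⟩
  exact ⟨k, rfl, identifiable_mono_aux 𝓒 CS CS' hsub hempty k 𝓒 𝓒 subset_rfl subset_rfl hk⟩
end

section
/- Let X be a finite set, let 𝒞 be a concept class over X, and let d : X × X → ℝ≥0. Then S^d_min(𝒞) ≤ S^d_prox(𝒞) ≤ S[MQ](𝒞). -/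
open scoped NNReal

/-- Monotonicity of `Identifiable` in the version space, for contrast-set
mappings that do not depend on the version space. -/
lemma ident_mono {X Q : Type*} (pt : Q → X) (CS : Q → (X → Bool) → Set X) :
    ∀ (n : ℕ) (V V' : Set (X → Bool)), V' ⊆ V →
      Identifiable pt (fun q C _ => CS q C) n V →
      Identifiable pt (fun q C _ => CS q C) n V'
  | 0, V, V', hsub, h => h.anti hsub
  | n + 1, V, V', hsub, h => by
      rcases h with h | ⟨q, hq⟩
      · exact Or.inl (h.anti hsub)
      · refine Or.inr ⟨q, fun Cstar hC => ?_⟩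
        obtain ⟨h1, h2⟩ := hq Cstar (hsub hC)
        constructor
        · intro he
          refine ident_mono pt CS n _ _ ?_ (h1 he)
          intro C hCm
          exact ⟨hsub hCm.1, hCm.2⟩
        · intro x' hx'
          refine ident_mono pt CS n _ _ ?_ (h2 x' hx')
          intro C hCm
          exact ⟨hsub hCm.1, hCm.2⟩

/-- Simulation lemma: if every response in model `B` (to the translated query
`f q`) is at least as informative as some valid response in model `A` (to `q`),
then identifiability transfers from `A` to `B` with the same number of rounds. -/
lemma ident_transfer {X QA QB : Type*} (ptA : QA → X) (ptB : QB → X)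
    (CSA : QA → (X → Bool) → Set X) (CSB : QB → (X → Bool) → Set X)
    (f : QA → QB) (hpt : ∀ q, ptB (f q) = ptA q)
    (H1 : ∀ q Cstar, CSB (f q) Cstar = ∅ →
      (CSA q Cstar = ∅ ∧ ∀ C, CSB (f q) C = ∅ → CSA q C = ∅) ∨
      ∃ y, y ∈ CSA q Cstar ∧
        ∀ C, CSB (f q) C = ∅ → y ∈ CSA q C ∧ C y = Cstar y)
    (H2 : ∀ q Cstar x', x' ∈ CSB (f q) Cstar →
      (CSA q Cstar = ∅ ∧
        ∀ C, x' ∈ CSB (f q) C → C x' = Cstar x' → CSA q C = ∅) ∨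
      ∃ y, y ∈ CSA q Cstar ∧
        ∀ C, x' ∈ CSB (f q) C → C x' = Cstar x' →
          y ∈ CSA q C ∧ C y = Cstar y) :
    ∀ (n : ℕ) (V : Set (X → Bool)),
      Identifiable ptA (fun q C _ => CSA q C) n V →
      Identifiable ptB (fun q C _ => CSB q C) n V
  | 0, V, h => h
  | n + 1, V, h => by
      rcases h with h | ⟨q, hq⟩
      · exact Or.inl h
      · refine Or.inr ⟨f q, fun Cstar hC => ?_⟩
        obtain ⟨hA1, hA2⟩ := hq Cstar hC
        simp only [hpt]
        constructor
        · intro he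
          rcases H1 q Cstar he with ⟨hAe, hall⟩ | ⟨y, hy, hall⟩
          · refine ident_mono ptB CSB n _ _ ?_
              (ident_transfer ptA ptB CSA CSB f hpt H1 H2 n _ (hA1 hAe))
            intro C hCm
            exact ⟨hCm.1, hCm.2.1, hall C hCm.2.2⟩
          · refine ident_mono ptB CSB n _ _ ?_
              (ident_transfer ptA ptB CSA CSB f hpt H1 H2 n _ (hA2 y hy))
            intro C hCm
            exact ⟨hCm.1, hCm.2.1, hall C hCm.2.2⟩
        · intro x' hx'
          rcases H2 q Cstar x' hx' with ⟨hAe, hall⟩ | ⟨y, hy, hall⟩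
          · refine ident_mono ptB CSB n _ _ ?_
              (ident_transfer ptA ptB CSA CSB f hpt H1 H2 n _ (hA1 hAe))
            intro C hCm
            exact ⟨hCm.1, hCm.2.1, hall C hCm.2.2.1 hCm.2.2.2⟩
          · refine ident_mono ptB CSB n _ _ ?_
              (ident_transfer ptA ptB CSA CSB f hpt H1 H2 n _ (hA2 y hy))
            intro C hCm
            exact ⟨hCm.1, hCm.2.1, hall C hCm.2.2.1 hCm.2.2.2⟩

/-- Over a finite domain, an empty minimum-distance contrast set means
there is no point of opposite label at all. -/
lemma csmin_empty {X : Type*} [Fintype X] (d : X → X → ℝ≥0) (x : X)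
    (C : X → Bool) (h : CSmin d x C = ∅) : ∀ y, C y = C x := by
  intro y
  by_contra hy
  obtain ⟨z, hz, hmin⟩ := Finset.exists_min_image
    (Finset.univ.filter fun z => C z ≠ C x) (d x) ⟨y, by simp [hy]⟩
  have hzmem : z ∈ CSmin d x C := by
    refine ⟨by simpa using hz, fun w hw => hmin w (by simp [hw])⟩
  rw [h] at hzmem
  exact hzmem

/-- Over a finite domain, for every `d : X × X → ℝ≥0`,
`S^d_min(𝓒) ≤ S^d_prox(𝓒) ≤ S[MQ](𝓒)`. -/
theorem statement2 {X : Type*} [Fintype X] (𝓒 : Set (X → Bool)) (d : X → X → ℝ≥0) :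
    Smin d 𝓒 ≤ Sprox d 𝓒 ∧ Sprox d 𝓒 ≤ SMQ 𝓒 := by
  constructor
  · -- Smin ≤ Sprox : simulate a proximity query (x, r) by the min-distance query x
    refine sInf_le_sInf ?_
    rintro n ⟨k, rfl, hk⟩
    refine ⟨k, rfl, ?_⟩
    refine ident_transfer (Prod.fst : X × ℝ≥0 → X) (id : X → X)
      (fun q C => CSprox d q.1 q.2 C) (fun x C => CSmin d x C)
      (Prod.fst) (fun q => rfl) ?_ ?_ k 𝓒 hk
    · -- empty min contrast set ⇒ empty proximity contrast set
      intro q Cstar he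
      left
      have key : ∀ C : X → Bool, CSmin d q.1 C = ∅ → CSprox d q.1 q.2 C = ∅ := by
        intro C hC
        ext w
        simp only [CSprox, Set.mem_setOf_eq, Set.mem_empty_iff_false, iff_false,
          not_and]
        intro hw
        exact absurd (csmin_empty d q.1 C hC w) hw
      exact ⟨key Cstar he, key⟩
    · -- a min-distance witness x' refines the proximity oracle's response
      intro q Cstar x' hx'
      by_cases hr : d q.1 x' ≤ q.2
      · right
        refine ⟨x', ⟨hx'.1, hr⟩, ?_⟩
        intro C hC hlab
        exact ⟨⟨hC.1, hr⟩, hlab⟩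
      · left
        have key : ∀ C : X → Bool, x' ∈ CSmin d q.1 C →
            CSprox d q.1 q.2 C = ∅ := by
          intro C hC
          ext w
          simp only [CSprox, Set.mem_setOf_eq, Set.mem_empty_iff_false, iff_false,
            not_and]
          intro hw hdw
          exact hr (le_trans (hC.2 w hw) hdw)
        exact ⟨key Cstar hx', fun C hC _ => key C hC⟩
  · -- Sprox ≤ SMQ : simulate a membership query x by the proximity query (x, 0)
    refine sInf_le_sInf ?_
    rintro n ⟨k, rfl, hk⟩
    refine ⟨k, rfl, ?_⟩
    refine ident_transfer (id : X → X) (Prod.fst : X × ℝ≥0 → X)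
      (fun _ _ => (∅ : Set X)) (fun q C => CSprox d q.1 q.2 C)
      (fun x => (x, 0)) (fun q => rfl) ?_ ?_ k 𝓒 hk
    · intro q Cstar _
      exact Or.inl ⟨rfl, fun _ _ => rfl⟩
    · intro q Cstar x' _
      exact Or.inl ⟨rfl, fun _ _ _ => rfl⟩
end

section
/- For every m ≥ 1, the class 𝒞^m_pmon of monotone monomials over {0,1}^m satisfies S^d_min(𝒞^m_pmon) = 1, where d is the Hamming distance. -/
open scoped NNReal

/-- The class of monotone monomials over `{0,1}^m`: for each `I ⊆ {1,…,m}`, the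
concept taking the value 1 on `b` iff `b i = 1` for all `i ∈ I`. -/
def pmonClass (m : ℕ) : Set ((Fin m → Bool) → Bool) :=
  {C | ∃ I : Finset (Fin m), C = fun b => decide (∀ i ∈ I, b i = true)}


namespace S4aux
open scoped NNReal
variable {m : ℕ}

def supp (b : Fin m → Bool) : Finset (Fin m) := Finset.univ.filter (fun i => b i = true)

def ind (I : Finset (Fin m)) : Fin m → Bool := fun i => decide (i ∈ I)

def z : Fin m → Bool := fun _ => false

lemma supp_ind (I : Finset (Fin m)) : supp (ind I) = I := by
  ext i; simp [supp, ind]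

lemma hd_z (b : Fin m → Bool) : hammingDist z b = (supp b).card := by
  unfold hammingDist supp
  congr 1
  ext i
  cases h : b i <;> simp [z, h]

lemma CI_true_iff (I : Finset (Fin m)) (b : Fin m → Bool) :
    (decide (∀ i ∈ I, b i = true) = true) ↔ I ⊆ supp b := by
  simp [supp, Finset.subset_iff]

lemma CI_z (I : Finset (Fin m)) :
    (decide (∀ i ∈ I, z i = true) : Bool) = if I = ∅ then true else false := by
  split
  · subst ‹I = ∅›; simp
  · simp only [decide_eq_false_iff_not]
    intro h
    exact ‹I ≠ ∅› (Finset.eq_empty_iff_forall_notMem.2 fun i hi => by simpa [z] using h i hi)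

end S4aux

lemma csmin_nonempty_aux {X : Type*} [Fintype X] (d : X → X → ℝ≥0) (x : X) (C : X → Bool)
    (h : ∃ x', C x' ≠ C x) : (CSmin d x C).Nonempty := by
  obtain ⟨x0, hx0⟩ := h
  obtain ⟨x', hx'mem, hx'min⟩ := Finset.exists_min_image
    (Finset.univ.filter fun y => C y ≠ C x) (d x) ⟨x0, by simp [hx0]⟩
  refine ⟨x', ?_, fun x'' h'' => hx'min x'' (by simp [h''])⟩
  simpa using hx'mem

/-- For every `m ≥ 1`, the class of monotone monomials over `{0,1}^m`
has minimum-distance contrast sample complexity exactly 1 under the Hamming distance. -/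
theorem statement4 (m : ℕ) (hm : 1 ≤ m) :
    Smin (fun a b => ((hammingDist a b : ℕ) : ℝ≥0)) (pmonClass m) = 1 := by
  classical
  open S4aux in
  set d : (Fin m → Bool) → (Fin m → Bool) → ℝ≥0 :=
    fun a b => ((hammingDist a b : ℕ) : ℝ≥0) with hd
  -- distance comparison transfers to supp cardinalities
  have dle : ∀ a b : Fin m → Bool, d z a ≤ d z b → (supp a).card ≤ (supp b).card := by
    intro a b h
    have := Nat.cast_le (α := ℝ≥0) |>.mp h
    simpa [hd_z] using this
  have dle' : ∀ a b : Fin m → Bool, (supp a).card ≤ (supp b).card → d z a ≤ d z b := by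
    intro a b h
    have : (hammingDist z a : ℝ≥0) ≤ (hammingDist z b : ℝ≥0) := by
      exact_mod_cast by simpa [hd_z] using h
    simpa [hd] using this
  -- evaluation facts
  have evalz : ∀ I : Finset (Fin m), I ≠ ∅ →
      (fun b => decide (∀ i ∈ I, b i = true)) z = false := by
    intro I hI; simpa [CI_z, hI] using rfl
  have evalind : ∀ I : Finset (Fin m),
      (fun b => decide (∀ i ∈ I, b i = true)) (ind I) = true := by
    intro I; exact (CI_true_iff I (ind I)).mpr (by rw [supp_ind])
  -- the one-round learner: query the all-zeros point
  have key : Identifiable (id : (Fin m → Bool) → (Fin m → Bool))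
      (fun x C _ => CSmin d x C) 1 (pmonClass m) := by
    simp only [Identifiable]
    right
    refine ⟨z, ?_⟩
    rintro Cstar ⟨I, rfl⟩
    constructor
    · -- empty contrast set: version space ⊆ {constant true}
      intro _
      have hconst : ∀ C, C ∈ pmonClass m → CSmin d z C = ∅ → C = fun _ => true := by
        rintro C ⟨J, rfl⟩ hemp
        rcases eq_or_ne J ∅ with rfl | hJ
        · funext b; simp
        · exfalso
          have h1 : (fun b => decide (∀ i ∈ J, b i = true)) (ind J)
              ≠ (fun b => decide (∀ i ∈ J, b i = true)) z := by
            rw [evalind J, evalz J hJ]; simp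
          have hne := csmin_nonempty_aux d z (fun b => decide (∀ i ∈ J, b i = true)) ⟨ind J, h1⟩
          rw [hemp] at hne
          exact Set.not_nonempty_empty hne
      rintro C ⟨hC, _, hCe⟩ C' ⟨hC', _, hC'e⟩
      rw [hconst C hC hCe, hconst C' hC' hC'e]
    · -- nonempty contrast set: the returned point pins down I exactly
      intro x' hx'
      rcases eq_or_ne I ∅ with rfl | hI
      · exact absurd (hx'.1 (by simp)) not_false
      · have hIz : (fun b => decide (∀ i ∈ I, b i = true)) z = false := evalz I hI
        have hx'I : I ⊆ supp x' := by
          have : (decide (∀ i ∈ I, x' i = true) : Bool) = true := by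
            have := hx'.1
            rw [hIz] at this
            simpa using this
          exact (CI_true_iff I x').mp this
        have hmin : d z x' ≤ d z (ind I) := hx'.2 (ind I) (by rw [evalind I, hIz]; simp)
        have hcard : (supp x').card ≤ I.card := by
          have := dle _ _ hmin
          rwa [supp_ind] at this
        have hsupp : supp x' = I := (Finset.eq_of_subset_of_card_le hx'I hcard).symm
        -- every remaining concept equals C_I
        have hall : ∀ C, C ∈ pmonClass m →
            C z = (fun b => decide (∀ i ∈ I, b i = true)) z →
            x' ∈ CSmin d z C → C = fun b => decide (∀ i ∈ I, b i = true) := by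
          rintro C ⟨J, rfl⟩ hz hmem
          have hJ : J ≠ ∅ := by
            rintro rfl
            rw [hIz] at hz
            simpa using hz
          have hJz : (fun b => decide (∀ i ∈ J, b i = true)) z = false := evalz J hJ
          have hJx' : J ⊆ supp x' := by
            have : (decide (∀ i ∈ J, x' i = true) : Bool) = true := by
              have := hmem.1
              rw [hJz] at this
              simpa using this
            exact (CI_true_iff J x').mp this
          have hminJ : d z x' ≤ d z (ind J) :=
            hmem.2 (ind J) (by rw [evalind J, hJz]; simp)
          have hcardJ : I.card ≤ J.card := by
            have := dle _ _ hminJ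
            rwa [supp_ind, hsupp] at this
          have : J = I := Finset.eq_of_subset_of_card_le (hsupp ▸ hJx') hcardJ
          rw [this]
        rintro C ⟨hC, hCz, hCmem, _⟩ C' ⟨hC', hC'z, hC'mem, _⟩
        rw [hall C hC hCz hCmem, hall C' hC' hC'z hC'mem]
  -- the class is not a subsingleton (lower bound)
  have hnotsub : ¬ (pmonClass m).Subsingleton := by
    intro h
    set i0 : Fin m := ⟨0, hm⟩
    have h1 : (fun b => decide (∀ i ∈ (∅ : Finset (Fin m)), b i = true)) ∈ pmonClass m :=
      ⟨∅, rfl⟩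
    have h2 : (fun b => decide (∀ i ∈ ({i0} : Finset (Fin m)), b i = true)) ∈ pmonClass m :=
      ⟨{i0}, rfl⟩
    have := congrFun (h h1 h2) (S4aux.z)
    simpa [z] using this
  -- compute the infimum
  unfold Smin sampleComplexity
  apply le_antisymm
  · exact sInf_le ⟨1, rfl, key⟩
  · apply le_sInf
    rintro n ⟨k, rfl, hk⟩
    have hk0 : k ≠ 0 := by
      rintro rfl
      exact hnotsub hk
    exact_mod_cast Nat.one_le_iff_ne_zero.mpr hk0
end

section
/- There exist constants c₁, c₂ > 0 and m₀ ∈ ℕ such that for all m ≥ m₀, the class 𝒞^m_pmon of monotone monomials over {0,1}^m satisfies c₁ · log₂ m ≤ S^d_prox(𝒞^m_pmon) ≤ c₂ · log₂ m, where d is the Hamming distance. -/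
open scoped NNReal

namespace St5

noncomputable def dH (m : ℕ) : (Fin m → Bool) → (Fin m → Bool) → ℝ≥0 :=
  fun a b => ((hammingDist a b : ℕ) : ℝ≥0)

def Idm (m : ℕ) : ℕ → Set ((Fin m → Bool) → Bool) → Prop :=
  Identifiable Prod.fst (fun q C _ => CSprox (dH m) q.1 q.2 C)

variable {m : ℕ} {V V' : Set ((Fin m → Bool) → Bool)} {n : ℕ}

lemma idm_zero : Idm m 0 V ↔ V.Subsingleton := Iff.rfl

lemma idm_succ : Idm m (n+1) V ↔ V.Subsingleton ∨
    ∃ q : (Fin m → Bool) × ℝ≥0, ∀ Cstar ∈ V,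
      ((CSprox (dH m) q.1 q.2 Cstar = ∅ →
        Idm m n {C ∈ V | C q.1 = Cstar q.1 ∧ CSprox (dH m) q.1 q.2 C = ∅}) ∧
      (∀ x' ∈ CSprox (dH m) q.1 q.2 Cstar,
        Idm m n {C ∈ V | C q.1 = Cstar q.1 ∧ x' ∈ CSprox (dH m) q.1 q.2 C ∧ C x' = Cstar x'})) :=
  Iff.rfl

lemma idm_of_subsingleton (h : V.Subsingleton) : ∀ n, Idm m n V
  | 0 => h
  | (n+1) => Or.inl h

lemma idm_anti : ∀ n, V' ⊆ V → Idm m n V → Idm m n V' := by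
  intro n
  induction n generalizing V V' with
  | zero => exact fun h hid => hid.anti h
  | succ n ih =>
    intro h hid
    rcases (idm_succ.mp hid) with hs | ⟨q, hq⟩
    · exact Or.inl (hs.anti h)
    · refine idm_succ.mpr (Or.inr ⟨q, fun Cstar hC => ?_⟩)
      obtain ⟨h1, h2⟩ := hq Cstar (h hC)
      refine ⟨fun hemp => ?_, fun x' hx' => ?_⟩
      · exact ih (by intro C hC2; exact ⟨h hC2.1, hC2.2⟩) (h1 hemp)
      · exact ih (by intro C hC2; exact ⟨h hC2.1, hC2.2⟩) (h2 x' hx')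


def mono (m : ℕ) (I : Finset (Fin m)) : (Fin m → Bool) → Bool :=
  fun b => decide (∀ i ∈ I, b i = true)

lemma mono_true {I : Finset (Fin m)} {b} : mono m I b = true ↔ ∀ i ∈ I, b i = true := by
  simp [mono]

def zeroPt (m : ℕ) : Fin m → Bool := fun _ => false

lemma mono_zeroPt {I : Finset (Fin m)} : mono m I (zeroPt m) = true ↔ I = ∅ := by
  simp [mono, zeroPt, Finset.eq_empty_iff_forall_notMem]

lemma mono_zeroPt_false {I : Finset (Fin m)} (h : I ≠ ∅) : mono m I (zeroPt m) = false := by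
  rw [Bool.eq_false_iff]; intro hT; exact h (mono_zeroPt.mp hT)

lemma hamming_zeroPt (x' : Fin m → Bool) :
    hammingDist (zeroPt m) x' = (Finset.univ.filter fun i => x' i = true).card := by
  rw [hammingDist]
  congr 1
  ext i
  simp [zeroPt]

def ind (K : Finset (Fin m)) : Fin m → Bool := fun i => decide (i ∈ K)

lemma hamming_ind (K : Finset (Fin m)) : hammingDist (zeroPt m) (ind K) = K.card := by
  rw [hamming_zeroPt]
  congr 1
  ext i
  simp [ind]

lemma mono_ind_self (K : Finset (Fin m)) : mono m K (ind K) = true := by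
  simp [mono, ind]

-- version-space sets for the upper bound
def Sset (m a b : ℕ) : Set ((Fin m → Bool) → Bool) :=
  {C | ∃ I : Finset (Fin m), a ≤ I.card ∧ I.card ≤ b ∧ C = mono m I}

lemma ub_step (a b t n : ℕ)
    (hω : ∀ W ⊆ Sset m (t+1) b, Idm m n W)
    (hpt : ∀ S : Finset (Fin m), S.card ≤ t →
      ∀ W ⊆ {C | ∃ K : Finset (Fin m), a ≤ K.card ∧ K ⊆ S ∧ C = mono m K}, Idm m n W)
    (V : Set ((Fin m → Bool) → Bool)) (hV : V ⊆ Sset m a b) : Idm m (n+1) V := by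
  refine idm_succ.mpr (Or.inr ⟨(zeroPt m, (t : ℝ≥0)), fun Cstar hC => ?_⟩)
  obtain ⟨I, hIa, hIb, rfl⟩ := hV hC
  constructor
  · intro _
    by_cases hI : I = ∅
    · apply idm_of_subsingleton
      intro C1 h1 C2 h2
      obtain ⟨K1, _, _, rfl⟩ := hV h1.1
      obtain ⟨K2, _, _, rfl⟩ := hV h2.1
      have e1 : K1 = ∅ := by
        have := h1.2.1
        rw [hI] at this
        have ht : mono m (∅:Finset (Fin m)) (zeroPt m) = true := mono_zeroPt.mpr rfl
        exact mono_zeroPt.mp (this.trans ht)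
      have e2 : K2 = ∅ := by
        have := h2.2.1
        rw [hI] at this
        have ht : mono m (∅:Finset (Fin m)) (zeroPt m) = true := mono_zeroPt.mpr rfl
        exact mono_zeroPt.mp (this.trans ht)
      rw [e1, e2]
    · apply hω
      intro C hC2
      obtain ⟨hCV, hlab, hcs⟩ := hC2
      obtain ⟨K, hKa, hKb, rfl⟩ := hV hCV
      refine ⟨K, ?_, hKb, rfl⟩
      have hKne : K ≠ ∅ := by
        intro h0
        have hKt : mono m K (zeroPt m) = true := mono_zeroPt.mpr h0
        exact hI (mono_zeroPt.mp (hlab.symm.trans hKt))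
      by_contra hcard
      push_neg at hcard
      have hmem : ind K ∈ CSprox (dH m) (zeroPt m) ((t : ℝ≥0)) (mono m K) := by
        constructor
        · rw [mono_ind_self, mono_zeroPt_false hKne]
          simp
        · show ((hammingDist (zeroPt m) (ind K) : ℕ) : ℝ≥0) ≤ (t : ℝ≥0)
          rw [hamming_ind]
          exact_mod_cast (by omega : K.card ≤ t)
      rw [hcs] at hmem
      exact hmem
  · intro x' hx'
    by_cases hI : I = ∅
    · exfalso
      apply hx'.1
      rw [hI]
      have h1 : mono m (∅:Finset (Fin m)) x' = true := mono_true.mpr (by simp)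
      have h2 : mono m (∅:Finset (Fin m)) (zeroPt m) = true := mono_zeroPt.mpr rfl
      rw [h1, h2]
    · have hlabI : mono m I (zeroPt m) = false := mono_zeroPt_false hI
      have hSle : (Finset.univ.filter fun i => x' i = true).card ≤ t := by
        have hd := hx'.2
        have : ((hammingDist (zeroPt m) x' : ℕ) : ℝ≥0) ≤ (t : ℝ≥0) := hd
        rw [hamming_zeroPt] at this
        exact_mod_cast this
      apply hpt _ hSle
      intro C hC2
      obtain ⟨hCV, hlab, hxC, _⟩ := hC2
      obtain ⟨K, hKa, hKb, rfl⟩ := hV hCV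
      refine ⟨K, hKa, ?_, rfl⟩
      have hKtrue : mono m K x' = true := by
        have hne := hxC.1
        rw [hlab, hlabI] at hne
        exact Bool.ne_false_iff.mp hne
      intro i hi
      simp only [Finset.mem_filter, Finset.mem_univ, true_and]
      exact mono_true.mp hKtrue i hi

lemma ub_main : ∀ n a b, b - a < 2^n →
    ∀ V ⊆ Sset m a b, Idm m (n+1) V := by
  intro n
  induction n with
  | zero =>
    intro a b hw V hV
    have hba : b ≤ a := by omega
    apply ub_step a b a 0 ?_ ?_ V hV
    · intro W hW
      apply idm_of_subsingleton (fun C hC => ?_) 0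
      exfalso
      obtain ⟨K, h1, h2, _⟩ := hW hC
      omega
    · intro S hS W hW
      intro C1 h1 C2 h2
      obtain ⟨K1, ha1, hs1, rfl⟩ := hW h1
      obtain ⟨K2, ha2, hs2, rfl⟩ := hW h2
      have e1 : K1 = S := Finset.eq_of_subset_of_card_le hs1 (by omega)
      have e2 : K2 = S := Finset.eq_of_subset_of_card_le hs2 (by omega)
      rw [e1, e2]
  | succ n ih =>
    intro a b hw V hV
    have h2n : 2^(n+1) = 2 * 2^n := by ring
    apply ub_step a (b) (a + (b-a)/2) (n+1) ?_ ?_ V hV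
    · intro W hW
      exact ih (a + (b-a)/2 + 1) b (by omega) W hW
    · intro S hS W hW
      apply ih a (a + (b-a)/2) (by omega)
      intro C hC
      obtain ⟨K, hKa, hKS, rfl⟩ := hW hC
      exact ⟨K, hKa, le_trans (Finset.card_le_card hKS) hS, rfl⟩

lemma pmon_sub : pmonClass m ⊆ Sset m 0 m := by
  rintro C ⟨I, rfl⟩
  exact ⟨I, Nat.zero_le _, by simpa using Finset.card_le_card (Finset.subset_univ I), rfl⟩

lemma ub_pmon : Idm m (Nat.log 2 m + 2) (pmonClass m) := by
  have := ub_main (m := m) (Nat.log 2 m + 1) 0 m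
    (by simpa using Nat.lt_pow_succ_log_self (by norm_num) m) (pmonClass m) pmon_sub
  simpa using this

def D (m j : ℕ) : (Fin m → Bool) → Bool :=
  fun b => decide (∀ i : Fin m, (i : ℕ) < j → b i = true)

def zcnt (x : Fin m → Bool) (j : ℕ) : ℕ :=
  (Finset.univ.filter fun i : Fin m => (i : ℕ) < j ∧ x i = false).card

lemma zcnt_zero (x : Fin m → Bool) : zcnt x 0 = 0 := by simp [zcnt]

lemma zcnt_mono (x : Fin m → Bool) {j j' : ℕ} (h : j ≤ j') : zcnt x j ≤ zcnt x j' := by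
  apply Finset.card_le_card
  intro i hi
  simp only [Finset.mem_filter, Finset.mem_univ, true_and] at *
  exact ⟨lt_of_lt_of_le hi.1 h, hi.2⟩

lemma D_true {x : Fin m → Bool} {j : ℕ} : D m j x = true ↔ zcnt x j = 0 := by
  simp only [D, decide_eq_true_eq, zcnt, Finset.card_eq_zero, Finset.filter_eq_empty_iff]
  constructor
  · intro h i _ hc
    rw [h i hc.1] at hc
    simp at hc
  · intro h i hij
    by_contra hbad
    exact h (Finset.mem_univ i) ⟨hij, by simp [Bool.eq_false_iff.mpr hbad]⟩

lemma D_false {x : Fin m → Bool} {j : ℕ} : D m j x = false ↔ zcnt x j ≠ 0 := by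
  rw [Bool.eq_false_iff, Ne, D_true]

lemma D_ne {a b : ℕ} (hab : a < b) (hbm : b ≤ m) : D m a ≠ D m b := by
  intro h
  set w : Fin m → Bool := fun i => decide ((i : ℕ) < a) with hw
  have h1 : D m a w = true := by
    simp [D, hw]
  have h2 : D m b w = false := by
    rw [D_false]
    intro h0
    rw [zcnt, Finset.card_eq_zero, Finset.filter_eq_empty_iff] at h0
    exact h0 (Finset.mem_univ ⟨a, lt_of_lt_of_le hab hbm⟩)
      ⟨hab, by simp [hw]⟩
  rw [h, h2] at h1
  exact Bool.false_ne_true h1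

lemma zcnt_le_ham {x x' : Fin m → Bool} {j : ℕ}
    (h : ∀ i : Fin m, (i : ℕ) < j → x' i = true) : zcnt x j ≤ hammingDist x x' := by
  rw [hammingDist]
  apply Finset.card_le_card
  intro i hi
  simp only [Finset.mem_filter, Finset.mem_univ, true_and] at *
  rw [hi.2, h i hi.1]
  simp

lemma CS_empty_of_lt_one {x : Fin m → Bool} {r : ℝ≥0} (hr : r < 1)
    (C : (Fin m → Bool) → Bool) : CSprox (dH m) x r C = ∅ := by
  ext x'
  simp only [CSprox, Set.mem_setOf_eq, Set.mem_empty_iff_false, iff_false, not_and]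
  intro hne hd
  apply hne
  have hxx : x' = x := by
    have h1 : ((hammingDist x x' : ℕ) : ℝ≥0) < 1 := lt_of_le_of_lt hd hr
    have : hammingDist x x' = 0 := by exact_mod_cast Nat.lt_one_iff.mp (by exact_mod_cast h1)
    exact (hammingDist_eq_zero.mp this).symm
  rw [hxx]

lemma CS_empty_of_far {x : Fin m → Bool} {r : ℝ≥0} {j : ℕ}
    (h : ¬ ((zcnt x j : ℕ) : ℝ≥0) ≤ r) : CSprox (dH m) x r (D m j) = ∅ := by
  have hj0 : zcnt x j ≠ 0 := by
    intro h0
    exact h (by rw [h0]; simp)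
  have hDx : D m j x = false := D_false.mpr hj0
  ext x'
  simp only [CSprox, Set.mem_setOf_eq, Set.mem_empty_iff_false, iff_false, not_and]
  intro hne hd
  rw [hDx] at hne
  have hDx' : D m j x' = true := Bool.ne_false_iff.mp hne
  have hall : ∀ i : Fin m, (i : ℕ) < j → x' i = true := by
    simpa only [D, decide_eq_true_eq] using hDx'
  apply h
  calc ((zcnt x j : ℕ) : ℝ≥0) ≤ ((hammingDist x x' : ℕ) : ℝ≥0) := by
        exact_mod_cast zcnt_le_ham hall
    _ ≤ r := hd


lemma ham_flip {x : Fin m → Bool} {i0 : Fin m} (h : x i0 = true) :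
    hammingDist x (fun i => if i = i0 then false else x i) = 1 := by
  rw [hammingDist]
  have he : (Finset.univ.filter fun i => x i ≠ if i = i0 then false else x i) = {i0} := by
    ext i
    simp only [Finset.mem_filter, Finset.mem_univ, true_and, Finset.mem_singleton]
    by_cases hi : i = i0
    · subst hi; simp [h]
    · simp [hi]
  rw [he, Finset.card_singleton]

lemma ham_setones (x : Fin m → Bool) (c : ℕ) :
    hammingDist x (fun i => if (i : ℕ) < c then true else x i) = zcnt x c := by
  rw [hammingDist, zcnt]
  congr 1
  ext i
  simp only [Finset.mem_filter, Finset.mem_univ, true_and]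
  by_cases hi : (i : ℕ) < c
  · simp [hi]
  · simp [hi]

lemma D_flip_false {j : ℕ} {i0 : Fin m} (h : (i0 : ℕ) < j) (x : Fin m → Bool) :
    D m j (fun i => if i = i0 then false else x i) = false := by
  rw [D_false]
  intro h0
  rw [zcnt, Finset.card_eq_zero, Finset.filter_eq_empty_iff] at h0
  exact h0 (Finset.mem_univ i0) ⟨h, by simp⟩

lemma D_setones_true {j c : ℕ} (h : j ≤ c) (x : Fin m → Bool) :
    D m j (fun i => if (i : ℕ) < c then true else x i) = true := by
  simp only [D, decide_eq_true_eq]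
  intro i hij
  simp [lt_of_lt_of_le hij h]

def Eset (m a b : ℕ) : Set ((Fin m → Bool) → Bool) := {C | ∃ j, a ≤ j ∧ j ≤ b ∧ C = D m j}

lemma D_mem_Eset {a j b : ℕ} (h1 : a ≤ j) (h2 : j ≤ b) : D m j ∈ Eset m a b := ⟨j, h1, h2, rfl⟩

lemma Eset_nontrivial {a b : ℕ} (hb : b ≤ m) (hab : a < b) : ¬ (Eset m a b).Subsingleton :=
  fun hs => D_ne hab hb (hs (D_mem_Eset le_rfl (le_of_lt hab)) (D_mem_Eset (le_of_lt hab) le_rfl))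

lemma lb_main : ∀ n a b, 1 ≤ a → b ≤ m → 3^n < b + 1 - a → ¬ Idm m n (Eset m a b) := by
  intro n
  induction n with
  | zero =>
    intro a b _ hb hab hid
    exact Eset_nontrivial hb (by omega) hid
  | succ n ih =>
    intro a b ha hb hsz hid
    have hp : 0 < 3^n := pow_pos (by norm_num) n
    have h33 : 3^(n+1) = 3 * 3^n := by ring
    have hab : a < b := by omega
    rcases idm_succ.mp hid with hs | ⟨⟨x, r⟩, hq⟩
    · exact Eset_nontrivial hb hab hs
    classical
    set θ := Nat.findGreatest (fun j => zcnt x j = 0) b with hθdef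
    set J := Nat.findGreatest (fun j => ((zcnt x j : ℕ) : ℝ≥0) ≤ r) b with hJdef
    have hθ0 : zcnt x θ = 0 := Nat.findGreatest_spec (P := fun j => zcnt x j = 0) (Nat.zero_le b) (zcnt_zero x)
    have hJr : ((zcnt x J : ℕ) : ℝ≥0) ≤ r :=
      Nat.findGreatest_spec (P := fun j => ((zcnt x j : ℕ) : ℝ≥0) ≤ r) (Nat.zero_le b)
        (by simp [zcnt_zero])
    have hθb : θ ≤ b := Nat.findGreatest_le b
    have hJb : J ≤ b := Nat.findGreatest_le b
    have hθJ : θ ≤ J := Nat.le_findGreatest (P := fun j => ((zcnt x j : ℕ) : ℝ≥0) ≤ r) hθb (by show ((zcnt x θ : ℕ) : ℝ≥0) ≤ r; rw [hθ0]; simp)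
    have hDjx_true : ∀ j, j ≤ θ → D m j x = true := fun j hj =>
      D_true.mpr (Nat.le_zero.mp (hθ0 ▸ zcnt_mono x hj))
    have hDjx_false : ∀ j, θ + 1 ≤ j → j ≤ b → D m j x = false := by
      intro j hj1 hj2
      rw [D_false]
      intro h0
      have : j ≤ θ := Nat.le_findGreatest (P := fun j => zcnt x j = 0) hj2 h0
      omega
    have hsplit : 3^n < θ + 1 - a ∨ 3^n < J + 1 - max a (θ+1) ∨ 3^n < b + 1 - max a (J+1) := by
      omega
    rcases hsplit with h1 | h2 | h3c
    · -- label-true side [a, θ]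
      have haθ : a ≤ θ := by omega
      obtain ⟨hb1, hb2⟩ := hq (D m a) (D_mem_Eset le_rfl (le_trans haθ hθb))
      rcases lt_or_ge r 1 with hr | hr
      · apply ih a θ ha (le_trans hθb hb) h1
        apply idm_anti n ?_ (hb1 (CS_empty_of_lt_one hr _))
        rintro C ⟨j, hj1, hj2, rfl⟩
        refine ⟨D_mem_Eset hj1 (le_trans hj2 hθb), ?_, CS_empty_of_lt_one hr _⟩
        show D m j x = D m a x
        rw [hDjx_true j hj2, hDjx_true a haθ]
      · have him : a - 1 < m := by omega
        set i0 : Fin m := ⟨a - 1, him⟩ with hi0def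
        have hi0a : (i0 : ℕ) < a := by simp [hi0def]; omega
        have hxi0 : x i0 = true := by
          by_contra hf
          have hzca : zcnt x a = 0 := Nat.le_zero.mp (hθ0 ▸ zcnt_mono x haθ)
          rw [zcnt, Finset.card_eq_zero, Finset.filter_eq_empty_iff] at hzca
          exact hzca (Finset.mem_univ i0) ⟨hi0a, Bool.eq_false_iff.mpr hf⟩
        set x1 : Fin m → Bool := fun i => if i = i0 then false else x i with hx1def
        have hD1 : ∀ j, a ≤ j → D m j x1 = false := fun j hj =>
          D_flip_false (lt_of_lt_of_le hi0a hj) x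
        have hCS1 : ∀ j, a ≤ j → j ≤ θ → x1 ∈ CSprox (dH m) x r (D m j) := by
          intro j hj1 hj2
          refine ⟨by rw [hD1 j hj1, hDjx_true j hj2]; simp, ?_⟩
          show ((hammingDist x x1 : ℕ) : ℝ≥0) ≤ r
          rw [ham_flip hxi0]
          exact_mod_cast hr
        apply ih a θ ha (le_trans hθb hb) h1
        apply idm_anti n ?_ (hb2 x1 (hCS1 a le_rfl haθ))
        rintro C ⟨j, hj1, hj2, rfl⟩
        refine ⟨D_mem_Eset hj1 (le_trans hj2 hθb), ?_, hCS1 j hj1 hj2, ?_⟩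
        · show D m j x = D m a x
          rw [hDjx_true j hj2, hDjx_true a haθ]
        · show D m j x1 = D m a x1
          rw [hD1 j hj1, hD1 a le_rfl]
    · -- label-false, CS reachable side [max a (θ+1), J]
      set a2 := max a (θ+1) with ha2def
      have ha2J : a2 ≤ J := by omega
      set x2 : Fin m → Bool := fun i => if (i : ℕ) < J then true else x i with hx2def
      have hCS2 : ∀ j, a2 ≤ j → j ≤ J → x2 ∈ CSprox (dH m) x r (D m j) := by
        intro j hj1 hj2
        refine ⟨?_, ?_⟩
        · rw [D_setones_true hj2 x, hDjx_false j (by omega) (le_trans hj2 hJb)]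
          simp
        · show ((hammingDist x x2 : ℕ) : ℝ≥0) ≤ r
          rw [ham_setones]
          exact hJr
      obtain ⟨hb1, hb2⟩ := hq (D m a2) (D_mem_Eset (le_max_left _ _) (le_trans ha2J hJb))
      apply ih a2 J (by omega) (le_trans hJb hb) h2
      apply idm_anti n ?_ (hb2 x2 (hCS2 a2 le_rfl ha2J))
      rintro C ⟨j, hj1, hj2, rfl⟩
      refine ⟨D_mem_Eset (by omega) (le_trans hj2 hJb), ?_, hCS2 j hj1 hj2, ?_⟩
      · show D m j x = D m a2 x
        rw [hDjx_false j (by omega) (le_trans hj2 hJb), hDjx_false a2 (by omega) (le_trans ha2J hJb)]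
      · show D m j x2 = D m a2 x2
        rw [D_setones_true hj2 x, D_setones_true ha2J x]
    · -- unreachable side [max a (J+1), b]
      set a3 := max a (J+1) with ha3def
      have ha3b : a3 ≤ b := by omega
      have hfar : ∀ j, a3 ≤ j → j ≤ b → ¬ ((zcnt x j : ℕ) : ℝ≥0) ≤ r := by
        intro j hj1 hj2
        exact Nat.findGreatest_is_greatest (P := fun j => ((zcnt x j : ℕ) : ℝ≥0) ≤ r) (by omega) hj2
      obtain ⟨hb1, hb2⟩ := hq (D m a3) (D_mem_Eset (le_max_left _ _) ha3b)
      apply ih a3 b (by omega) hb h3c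
      apply idm_anti n ?_ (hb1 (CS_empty_of_far (hfar a3 le_rfl ha3b)))
      rintro C ⟨j, hj1, hj2, rfl⟩
      have hzj : zcnt x j ≠ 0 := by
        intro h0
        exact hfar j hj1 hj2 (by rw [h0]; simp)
      have hzj3 : zcnt x a3 ≠ 0 := by
        intro h0
        exact hfar a3 le_rfl ha3b (by rw [h0]; simp)
      refine ⟨D_mem_Eset (by omega) hj2, ?_, CS_empty_of_far (hfar j hj1 hj2)⟩
      show D m j x = D m a3 x
      rw [D_false.mpr hzj, D_false.mpr hzj3]

lemma Eset_sub_pmon : Eset m 1 m ⊆ pmonClass m := by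
  rintro C ⟨j, _, _, rfl⟩
  refine ⟨Finset.univ.filter fun i : Fin m => (i : ℕ) < j, ?_⟩
  funext b
  show decide _ = decide _
  apply decide_eq_decide.mpr
  simp

lemma lb_pmon {n : ℕ} (h : 3^n < m) : ¬ Idm m n (pmonClass m) := by
  intro hid
  exact lb_main n 1 m le_rfl le_rfl (by omega) (idm_anti n Eset_sub_pmon hid)

end St5

/-- There are constants `c₁, c₂ > 0` and `m₀` such that for all
`m ≥ m₀`, the proximity-model sample complexity of the monotone monomials over
`{0,1}^m` under the Hamming distance is (a finite value `k` and is) between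
`c₁ · log₂ m` and `c₂ · log₂ m`. -/
theorem statement5 :
    ∃ c₁ c₂ : ℝ, 0 < c₁ ∧ 0 < c₂ ∧ ∃ m₀ : ℕ, ∀ m : ℕ, m₀ ≤ m →
      ∃ k : ℕ,
        Sprox (X := Fin m → Bool) (fun a b => ((hammingDist a b : ℕ) : ℝ≥0)) (pmonClass m) = (k : ℕ∞) ∧
        c₁ * Real.logb 2 m ≤ (k : ℝ) ∧ (k : ℝ) ≤ c₂ * Real.logb 2 m := by
  classical
  refine ⟨1/2, 2, by norm_num, by norm_num, 4, fun m hm => ?_⟩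
  have hex : ∃ k : ℕ, St5.Idm m k (pmonClass m) := ⟨Nat.log 2 m + 2, St5.ub_pmon⟩
  set k := Nat.find hex with hkdef
  have hIdk : St5.Idm m k (pmonClass m) := Nat.find_spec hex
  have hm0 : (0:ℝ) < (m:ℝ) := by exact_mod_cast (by omega : 0 < m)
  have hlogm : (2:ℝ) ≤ Real.logb 2 m := by
    have h4 : Real.logb 2 ((2:ℝ)^(2:ℕ)) ≤ Real.logb 2 m := by
      rw [Real.logb_le_logb (by norm_num) (by norm_num) hm0]
      norm_num
      exact_mod_cast hm
    rw [Real.logb_pow, Real.logb_self_eq_one (by norm_num)] at h4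
    simpa using h4
  refine ⟨k, ?_, ?_, ?_⟩
  · rw [Sprox, sampleComplexity]
    apply le_antisymm
    · exact sInf_le ⟨k, rfl, hIdk⟩
    · apply le_sInf
      rintro n ⟨k', rfl, hk'⟩
      exact_mod_cast Nat.find_min' hex hk'
  · have h3 : m ≤ 3^k := by
      by_contra h
      exact St5.lb_pmon (by omega) hIdk
    have h4 : (m:ℝ) ≤ (2:ℝ)^(2*k) := by
      calc (m:ℝ) ≤ (3:ℝ)^k := by exact_mod_cast h3
        _ ≤ (4:ℝ)^k := by
            apply pow_le_pow_left₀ (by norm_num) (by norm_num)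
        _ = (2:ℝ)^(2*k) := by rw [pow_mul]; norm_num
    have h5 : Real.logb 2 m ≤ Real.logb 2 ((2:ℝ)^(2*k)) := by
      rw [Real.logb_le_logb (by norm_num) hm0 (by positivity)]
      exact h4
    rw [Real.logb_pow, Real.logb_self_eq_one (by norm_num)] at h5
    push_cast at h5
    linarith
  · have h1 : (k:ℝ) ≤ (Nat.log 2 m : ℝ) + 2 := by
      exact_mod_cast Nat.find_min' hex St5.ub_pmon
    have h2 : (Nat.log 2 m : ℝ) ≤ Real.logb 2 m := by
      have := Real.natLog_le_logb m 2
      simpa using this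
    linarith
end

section
/- Fix m ≥ 1 and let 𝒞'_pmon be the concept class over {0,1}^{m+1} containing, for each I ⊆ {1,…,m}, the concept C'_I defined by C'_I(b_1,…,b_m,0) = C_I(b_1,…,b_m) and C'_I(b_1,…,b_m,1) = 1 − C_I(b_1,…,b_m), where C_I ∈ 𝒞^m_pmon, and no other concepts. Then S[MQ](𝒞'_pmon) = S^d_min(𝒞'_pmon) = S^d_prox(𝒞'_pmon) = m, where d is the Hamming distance on {0,1}^{m+1}. -/
open scoped NNReal

/-- The class `𝒞'_pmon` over `{0,1}^{m+1}`: for each `I ⊆ {1,…,m}` the concept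
agreeing with the monotone monomial `C_I` on points whose last coordinate is 0, and
with its negation on points whose last coordinate is 1. -/
def pmonExtClass (m : ℕ) : Set ((Fin (m + 1) → Bool) → Bool) :=
  {C | ∃ I : Finset (Fin m),
    C = fun b => xor (b (Fin.last m)) (decide (∀ i ∈ I, b i.castSucc = true))}

/-!
Every concept of the class reverses its label when the last coordinate is flipped, and the
flipped point is at Hamming distance 1, the least possible. So the minimum-distance oracle may
always return it, and the proximity oracle returns it or nothing; either way the answer follows
from the label of the queried point. Each round thus gains at most one bit, and the class has
`2 ^ m` concepts. Conversely, `m` membership queries at the points that are `0` in exactly one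
of the first `m` coordinates read off `I`.
-/

namespace Identifiable

variable {X Q : Type*} {pt : Q → X} {CS : Q → (X → Bool) → Set (X → Bool) → Set X}

/-- The oracle can always answer so that the learner learns nothing beyond the label of the
queried point. -/
def LabelDeterminesReply (pt : Q → X) (CS : Q → (X → Bool) → Set (X → Bool) → Set X)
    (𝓒 : Set (X → Bool)) : Prop :=
  ∀ q, ∀ V ⊆ 𝓒, (∀ C ∈ V, CS q C V = ∅) ∨
    ∃ x', ∀ C ∈ V, x' ∈ CS q C V ∧ ∀ C' ∈ V, C' (pt q) = C (pt q) → C' x' = C x'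

theorem fiber_of_labelDeterminesReply {𝓒 V : Set (X → Bool)} {n : ℕ} {q : Q}
    (h : LabelDeterminesReply pt CS 𝓒) (hV : V ⊆ 𝓒)
    (hq : ∀ Cstar ∈ V,
      (CS q Cstar V = ∅ →
        Identifiable pt CS n {C ∈ V | C (pt q) = Cstar (pt q) ∧ CS q C V = ∅}) ∧
      (∀ x' ∈ CS q Cstar V,
        Identifiable pt CS n {C ∈ V | C (pt q) = Cstar (pt q) ∧ x' ∈ CS q C V ∧ C x' = Cstar x'}))
    {Cstar : X → Bool} (hC : Cstar ∈ V) :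
    Identifiable pt CS n {C ∈ V | C (pt q) = Cstar (pt q)} := by
  rcases h q V hV with hempty | ⟨x', hx'⟩
  · convert (hq Cstar hC).1 (hempty Cstar hC) using 1
    ext C
    exact ⟨fun ⟨hCV, hlabel⟩ => ⟨hCV, hlabel, hempty C hCV⟩,
      fun ⟨hCV, hlabel, _⟩ => ⟨hCV, hlabel⟩⟩
  · convert (hq Cstar hC).2 x' (hx' Cstar hC).1 using 1
    ext C
    refine ⟨fun ⟨hCV, hlabel⟩ => ⟨hCV, hlabel, (hx' C hCV).1, ?_⟩,
      fun ⟨hCV, hlabel, _⟩ => ⟨hCV, hlabel⟩⟩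
    exact (hx' Cstar hC).2 C hCV hlabel

/-- Each round splits the version space according to one label only. -/
theorem encard_le_of_labelDeterminesReply {𝓒 : Set (X → Bool)}
    (h : LabelDeterminesReply pt CS 𝓒) :
    ∀ (n : ℕ) (V : Set (X → Bool)), V ⊆ 𝓒 → Identifiable pt CS n V → V.encard ≤ 2 ^ n
  | 0, V, _, hid => by simpa using Set.encard_le_one_iff_subsingleton.mpr hid
  | n + 1, V, hV, Or.inl hsub =>
    (Set.encard_le_one_iff_subsingleton.mpr hsub).trans (one_le_pow₀ one_le_two)
  | n + 1, V, hV, Or.inr ⟨q, hq⟩ => by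
    have hfiber : ∀ b, {C ∈ V | C (pt q) = b}.encard ≤ 2 ^ n := by
      intro b
      rcases Set.eq_empty_or_nonempty {C ∈ V | C (pt q) = b} with hempty | ⟨Cstar, hCV, rfl⟩
      · simp [hempty]
      · exact encard_le_of_labelDeterminesReply h n _ ((Set.sep_subset _ _).trans hV)
          (fiber_of_labelDeterminesReply h hV hq hCV)
    have hsplit : V = {C ∈ V | C (pt q) = true} ∪ {C ∈ V | C (pt q) = false} := by
      ext C; cases hC : C (pt q) <;> simp [hC]
    calc V.encard
        = ({C ∈ V | C (pt q) = true} ∪ {C ∈ V | C (pt q) = false}).encard := congrArg _ hsplit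
      _ ≤ {C ∈ V | C (pt q) = true}.encard + {C ∈ V | C (pt q) = false}.encard :=
          Set.encard_union_le _ _
      _ ≤ 2 ^ n + 2 ^ n := add_le_add (hfiber true) (hfiber false)
      _ = 2 ^ (n + 1) := by rw [pow_succ, mul_two]

/-- The learner queries the points `x i`, `i ∈ s`, in turn; contrastive answers only shrink the
version space further. -/
theorem of_determining (hpt : Function.Surjective pt) {ι : Type*} [DecidableEq ι] (x : ι → X)
    (s : Finset ι) :
    ∀ V : Set (X → Bool), (∀ C ∈ V, ∀ C' ∈ V, (∀ i ∈ s, C (x i) = C' (x i)) → C = C') →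
      Identifiable pt CS s.card V := by
  induction s using Finset.induction_on with
  | empty => exact fun V hV C hC C' hC' => hV C hC C' hC' (by simp)
  | insert i s hi ih =>
    intro V hV
    obtain ⟨q, hq⟩ := hpt (x i)
    have hsub : ∀ (Cstar : X → Bool) (P : (X → Bool) → Prop),
        Identifiable pt CS s.card {C ∈ V | C (pt q) = Cstar (pt q) ∧ P C} := by
      refine fun Cstar P => ih _ fun C ⟨hC, hCi, _⟩ C' ⟨hC', hC'i, _⟩ hagree => hV C hC C' hC' ?_
      rw [Finset.forall_mem_insert, ← hq, hCi, hC'i]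
      exact ⟨rfl, hagree⟩
    rw [Finset.card_insert_of_notMem hi]
    exact Or.inr ⟨q, fun Cstar _ => ⟨fun _ => hsub Cstar _, fun x' _ => hsub Cstar _⟩⟩

end Identifiable

section SampleComplexity

variable {X Q : Type*} {pt : Q → X} {CS : Q → (X → Bool) → Set (X → Bool) → Set X}
  {𝓒 : Set (X → Bool)}

theorem sampleComplexity_le {n : ℕ} (h : Identifiable pt CS n 𝓒) :
    sampleComplexity pt CS 𝓒 ≤ n :=
  sInf_le ⟨n, rfl, h⟩

theorem le_sampleComplexity {n : ℕ} (h : ∀ k, Identifiable pt CS k 𝓒 → n ≤ k) :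
    (n : ℕ∞) ≤ sampleComplexity pt CS 𝓒 :=
  le_sInf fun _ ⟨k, hk, hid⟩ => hk ▸ Nat.cast_le.mpr (h k hid)

end SampleComplexity

theorem one_le_hammingDist {ι β : Type*} [Fintype ι] [DecidableEq β] {x y : ι → β}
    (h : x ≠ y) :
    (1 : ℝ≥0) ≤ ((hammingDist x y : ℕ) : ℝ≥0) :=
  Nat.one_le_cast.mpr (hammingDist_pos.mpr h)

namespace PmonExt

variable {m : ℕ}

def concept (m : ℕ) (I : Finset (Fin m)) : (Fin (m + 1) → Bool) → Bool :=
  fun b => xor (b (Fin.last m)) (decide (∀ i ∈ I, b i.castSucc = true))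

theorem pmonExtClass_eq_range : pmonExtClass m = Set.range (concept m) := by
  ext C; exact exists_congr fun I => eq_comm

def probe (j : Fin m) : Fin (m + 1) → Bool := fun i => decide (i ≠ j.castSucc)

theorem concept_probe (I : Finset (Fin m)) (j : Fin m) :
    concept m I (probe j) = decide (j ∈ I) := by
  simp [concept, probe, (Fin.castSucc_lt_last j).ne']

theorem concept_injective : Function.Injective (concept m) := fun I J h =>
  Finset.ext fun j => by simpa [concept_probe] using congrFun h (probe j)

theorem two_pow_le_encard : (2 ^ m : ℕ∞) ≤ (pmonExtClass m).encard := by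
  rw [pmonExtClass_eq_range]
  refine le_of_eq_of_le ?_ concept_injective.encard_range
  simp [ENat.card_eq_coe_fintype_card]

theorem eq_of_probe_eq {C C' : (Fin (m + 1) → Bool) → Bool} (hC : C ∈ pmonExtClass m)
    (hC' : C' ∈ pmonExtClass m) (h : ∀ j, C (probe j) = C' (probe j)) : C = C' := by
  rw [pmonExtClass_eq_range] at hC hC'
  obtain ⟨⟨I, rfl⟩, ⟨J, rfl⟩⟩ := And.intro hC hC'
  exact congrArg _ (Finset.ext fun j => by simpa [concept_probe] using h j)

def flipLast (x : Fin (m + 1) → Bool) : Fin (m + 1) → Bool :=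
  Function.update x (Fin.last m) (!x (Fin.last m))

theorem apply_flipLast {C : (Fin (m + 1) → Bool) → Bool} (hC : C ∈ pmonExtClass m)
    (x : Fin (m + 1) → Bool) : C (flipLast x) = !C x := by
  obtain ⟨I, rfl⟩ := hC
  have hinit : ∀ i : Fin m, flipLast x i.castSucc = x i.castSucc := fun i =>
    Function.update_of_ne (Fin.castSucc_lt_last i).ne _ _
  simp only [hinit]
  simp [flipLast]

theorem hammingDist_flipLast (x : Fin (m + 1) → Bool) : hammingDist x (flipLast x) = 1 := by
  have : ({i | x i ≠ flipLast x i} : Finset (Fin (m + 1))) = {Fin.last m} := by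
    ext i
    rw [Finset.mem_filter]
    by_cases hi : i = Fin.last m <;> simp [hi, flipLast]
  rw [hammingDist, this, Finset.card_singleton]

open Identifiable

variable {Q : Type*} {pt : Q → Fin (m + 1) → Bool}
  {CS : Q → ((Fin (m + 1) → Bool) → Bool) → Set ((Fin (m + 1) → Bool) → Bool) →
    Set (Fin (m + 1) → Bool)}

theorem sampleComplexity_eq (hpt : Function.Surjective pt)
    (h : LabelDeterminesReply pt CS (pmonExtClass m)) :
    sampleComplexity pt CS (pmonExtClass m) = m := by
  apply le_antisymm
  · simpa using sampleComplexity_le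
      (of_determining hpt probe Finset.univ _ fun _ hC _ hC' h =>
        eq_of_probe_eq hC hC' fun j => h j (Finset.mem_univ j))
  · refine le_sampleComplexity fun k hk => ?_
    have hcount : ((2 ^ m : ℕ) : ℕ∞) ≤ ((2 ^ k : ℕ) : ℕ∞) := by
      push_cast
      exact two_pow_le_encard.trans (encard_le_of_labelDeterminesReply h k _ subset_rfl hk)
    exact (Nat.pow_le_pow_iff_right one_lt_two).mp (Nat.cast_le.mp hcount)

theorem labelDeterminesReply_of_flipLast_mem
    (h : ∀ q, (∀ C ∈ pmonExtClass m, ∀ V, CS q C V = ∅) ∨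
      ∀ C ∈ pmonExtClass m, ∀ V, flipLast (pt q) ∈ CS q C V) :
    LabelDeterminesReply pt CS (pmonExtClass m) := fun q V hV =>
  (h q).imp (fun hempty C hC => hempty C (hV hC) V) fun hmem =>
    ⟨flipLast (pt q), fun C hC => ⟨hmem C (hV hC) V, fun C' hC' hlabel => by
      rw [apply_flipLast (hV hC), apply_flipLast (hV hC'), hlabel]⟩⟩

theorem flipLast_mem_CSmin {C : (Fin (m + 1) → Bool) → Bool} (hC : C ∈ pmonExtClass m)
    (x : Fin (m + 1) → Bool) :
    flipLast x ∈ CSmin (fun a b => ((hammingDist a b : ℕ) : ℝ≥0)) x C := by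
  refine ⟨by simp [apply_flipLast hC], fun y hy => ?_⟩
  dsimp only
  rw [hammingDist_flipLast, Nat.cast_one]
  exact one_le_hammingDist fun hxy => hy (congrArg C hxy.symm)

theorem CSprox_eq_empty {r : ℝ≥0} (hr : r < 1) (x : Fin (m + 1) → Bool)
    (C : (Fin (m + 1) → Bool) → Bool) :
    CSprox (fun a b => ((hammingDist a b : ℕ) : ℝ≥0)) x r C = ∅ :=
  Set.eq_empty_of_forall_notMem fun _ ⟨hy, hdist⟩ =>
    (one_le_hammingDist fun hxy => hy (congrArg C hxy.symm)).not_gt (hdist.trans_lt hr)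

theorem flipLast_mem_CSprox {r : ℝ≥0} (hr : 1 ≤ r) {C : (Fin (m + 1) → Bool) → Bool}
    (hC : C ∈ pmonExtClass m) (x : Fin (m + 1) → Bool) :
    flipLast x ∈ CSprox (fun a b => ((hammingDist a b : ℕ) : ℝ≥0)) x r C :=
  ⟨by simp [apply_flipLast hC], by dsimp only; rwa [hammingDist_flipLast, Nat.cast_one]⟩

end PmonExt

open PmonExt in
theorem statement6_general (m : ℕ) :
    SMQ (pmonExtClass m) = (m : ℕ∞) ∧
    Smin (fun a b => ((hammingDist a b : ℕ) : ℝ≥0)) (pmonExtClass m) = (m : ℕ∞) ∧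
    Sprox (fun a b => ((hammingDist a b : ℕ) : ℝ≥0)) (pmonExtClass m) = (m : ℕ∞) := by
  refine ⟨?_, ?_, ?_⟩
  · exact sampleComplexity_eq Function.surjective_id
      (labelDeterminesReply_of_flipLast_mem fun _ => Or.inl fun _ _ _ => rfl)
  · exact sampleComplexity_eq Function.surjective_id
      (labelDeterminesReply_of_flipLast_mem fun x => Or.inr fun _ hC _ => flipLast_mem_CSmin hC x)
  · refine sampleComplexity_eq Prod.fst_surjective
      (labelDeterminesReply_of_flipLast_mem fun ⟨x, r⟩ => ?_)
    rcases lt_or_ge r 1 with hr | hr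
    · exact Or.inl fun C _ _ => CSprox_eq_empty hr x C
    · exact Or.inr fun _ hC _ => flipLast_mem_CSprox hr hC x

/-- For `m ≥ 1`, the membership-query complexity, the
minimum-distance sample complexity and the proximity-model sample complexity of
`𝒞'_pmon` (under the Hamming distance on `{0,1}^{m+1}`) all equal `m`. -/
theorem statement6 (m : ℕ) (hm : 1 ≤ m) :
    SMQ (pmonExtClass m) = (m : ℕ∞) ∧
    Smin (fun a b => ((hammingDist a b : ℕ) : ℝ≥0)) (pmonExtClass m) = (m : ℕ∞) ∧
    Sprox (fun a b => ((hammingDist a b : ℕ) : ℝ≥0)) (pmonExtClass m) = (m : ℕ∞) :=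
  statement6_general m
end

section
/- For every m ≥ 2, the class 𝒞^m_mon of monomials over m Boolean variables satisfies S^d_min(𝒞^m_mon) = 2, where d is the Hamming distance on {0,1}^m. -/
open scoped NNReal

/-- The class `𝒞^m_mon` of monomials over `m` Boolean variables in which each variable
occurs at most once (negated or unnegated): for disjoint `I, J ⊆ {1,…,m}`, the concept
taking value 1 on `b` iff `b i = 0` for all `i ∈ I` and `b j = 1` for all `j ∈ J`. -/
def monClass (m : ℕ) : Set ((Fin m → Bool) → Bool) :=
  {C | ∃ I J : Finset (Fin m), Disjoint I J ∧
    C = fun b => decide ((∀ i ∈ I, b i = false) ∧ (∀ j ∈ J, b j = true))}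

/- ======================= auxiliary lemmas ======================= -/

section Basic
variable {X Q : Type*} (pt : Q → X) (CS : Q → (X → Bool) → Set (X → Bool) → Set X)

lemma Identifiable_zero (V : Set (X → Bool)) :
    Identifiable pt CS 0 V ↔ V.Subsingleton := Iff.rfl

lemma Identifiable_succ (n : ℕ) (V : Set (X → Bool)) : Identifiable pt CS (n+1) V ↔
      (V.Subsingleton ∨
        ∃ q : Q, ∀ Cstar ∈ V,
          ((CS q Cstar V = ∅ →
            Identifiable pt CS n
              {C ∈ V | C (pt q) = Cstar (pt q) ∧ CS q C V = ∅}) ∧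
          (∀ x' ∈ CS q Cstar V,
            Identifiable pt CS n
              {C ∈ V | C (pt q) = Cstar (pt q) ∧ x' ∈ CS q C V ∧ C x' = Cstar x'}))) :=
  Iff.rfl

lemma identifiable_mono :
    ∀ (n : ℕ) (V : Set (X → Bool)), Identifiable pt CS n V → Identifiable pt CS (n+1) V := by
  intro n
  induction n with
  | zero => intro V h; rw [Identifiable_succ]; exact Or.inl h
  | succ n ih =>
    intro V h
    rw [Identifiable_succ] at h ⊢
    rcases h with h | ⟨q, hq⟩
    · exact Or.inl h
    · exact Or.inr ⟨q, fun Cs hCs => ⟨fun hE => ih _ ((hq Cs hCs).1 hE),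
        fun x' hx' => ih _ ((hq Cs hCs).2 x' hx')⟩⟩

lemma CSmin_nonempty [Fintype X] (d : X → X → ℝ≥0) (x : X) (C : X → Bool)
    (h : ∃ y, C y ≠ C x) : (CSmin d x C).Nonempty := by
  obtain ⟨y, hy⟩ := h
  obtain ⟨z, hz, hmin⟩ := Finset.exists_min_image
    (Finset.univ.filter fun y => C y ≠ C x) (d x) ⟨y, by simp [hy]⟩
  exact ⟨z, (Finset.mem_filter.mp hz).2, fun w hw => hmin w (by simp [hw])⟩

end Basic

abbrev dH (m : ℕ) : (Fin m → Bool) → (Fin m → Bool) → ℝ≥0 :=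
  fun a b => ((hammingDist a b : ℕ) : ℝ≥0)

def Cmon {m : ℕ} (I J : Finset (Fin m)) : (Fin m → Bool) → Bool :=
  fun b => decide ((∀ i ∈ I, b i = false) ∧ (∀ j ∈ J, b j = true))

section Mon
variable {m : ℕ}

lemma Cmon_mem {I J : Finset (Fin m)} (h : Disjoint I J) : Cmon I J ∈ monClass m :=
  ⟨I, J, h, rfl⟩

lemma Cmon_true {I J : Finset (Fin m)} {b : Fin m → Bool} :
    Cmon I J b = true ↔ ((∀ i ∈ I, b i = false) ∧ (∀ j ∈ J, b j = true)) := by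
  simp [Cmon]

lemma Cmon_false {I J : Finset (Fin m)} {b : Fin m → Bool} :
    Cmon I J b = false ↔ ¬((∀ i ∈ I, b i = false) ∧ (∀ j ∈ J, b j = true)) := by
  simp [Cmon]

lemma dset_card (a b : Fin m → Bool) :
    hammingDist a b = (Finset.univ.filter fun k => a k ≠ b k).card := rfl

lemma eq_of_forced {a b : Fin m → Bool} {S : Finset (Fin m)}
    (hsub : ∀ k ∈ S, a k ≠ b k) (hcard : hammingDist a b ≤ S.card) :
    ∀ k, b k = if k ∈ S then !(a k) else a k := by
  have h1 : S ⊆ Finset.univ.filter fun k => a k ≠ b k := fun k hk => by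
    simp [hsub k hk]
  have h2 : S = Finset.univ.filter fun k => a k ≠ b k :=
    Finset.eq_of_subset_of_card_le h1 (by rw [← dset_card]; exact hcard)
  intro k
  by_cases hk : k ∈ S
  · have hne : a k ≠ b k := hsub k hk
    simp only [hk, if_true]
    cases hak : a k <;> cases hbk : b k <;> simp_all
  · have hne : ¬ (a k ≠ b k) := by rw [h2] at hk; simpa using hk
    simp only [hk, if_false]
    exact (not_not.mp hne).symm

lemma csmin_false_eq {I J : Finset (Fin m)} (hIJ : Disjoint I J) {q x' : Fin m → Bool}
    (hq : Cmon I J q = false)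
    (hx : x' ∈ CSmin (dH m) q (Cmon I J)) :
    ∀ k, x' k = if k ∈ I then false else if k ∈ J then true else q k := by
  obtain ⟨hne, hmin⟩ := hx
  rw [hq] at hne
  have hxpos : Cmon I J x' = true := by simpa using hne
  obtain ⟨hpI, hpJ⟩ := Cmon_true.mp hxpos
  have hprojpos : Cmon I J (fun k => if k ∈ I then false else if k ∈ J then true else q k)
      = true := by
    refine Cmon_true.mpr ⟨fun i hi => by simp [hi], fun j hj => ?_⟩
    have hjI : j ∉ I := Finset.disjoint_right.mp hIJ hj
    simp [hj, hjI]
  have hle : hammingDist q x' ≤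
      hammingDist q (fun k => if k ∈ I then false else if k ∈ J then true else q k) := by
    have := hmin _ (by rw [hprojpos, hq]; simp)
    exact_mod_cast this
  have hforced : ∀ k ∈ (Finset.univ.filter fun k =>
      q k ≠ (if k ∈ I then false else if k ∈ J then true else q k)), q k ≠ x' k := by
    intro k hk
    simp only [Finset.mem_filter, Finset.mem_univ, true_and] at hk
    by_cases hkI : k ∈ I
    · have hq1 : q k = true := by
        simp only [hkI, if_true] at hk
        simpa using hk
      rw [hq1, hpI k hkI]; simp
    · by_cases hkJ : k ∈ J
      · have hq1 : q k = false := by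
          simp only [hkI, if_false, hkJ, if_true] at hk
          simpa using hk
        rw [hq1, hpJ k hkJ]; simp
      · simp [hkI, hkJ] at hk
  have hcard : hammingDist q x' ≤ (Finset.univ.filter fun k =>
      q k ≠ (if k ∈ I then false else if k ∈ J then true else q k)).card := by
    rw [← dset_card]; exact hle
  have hmain := eq_of_forced hforced hcard
  intro k
  rw [hmain k]
  by_cases hkI : k ∈ I
  · have hkJ : k ∉ J := Finset.disjoint_left.mp hIJ hkI
    cases hqk : q k <;> simp [hkI, hkJ, hqk]
  · by_cases hkJ : k ∈ J
    · cases hqk : q k <;> simp [hkI, hkJ, hqk]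
    · simp [hkI, hkJ]

lemma hamming_update (q : Fin m → Bool) (c : Fin m) :
    hammingDist q (Function.update q c (!(q c))) = 1 := by
  rw [dset_card]
  have : (Finset.univ.filter fun k => q k ≠ Function.update q c (!(q c)) k) = {c} := by
    ext k
    simp only [Finset.mem_filter, Finset.mem_univ, true_and, Finset.mem_singleton]
    constructor
    · intro h
      by_contra hkc
      rw [Function.update_of_ne hkc] at h
      exact h rfl
    · intro h; subst h
      rw [Function.update_self]
      cases q k <;> simp
  rw [this, Finset.card_singleton]

lemma csmin_true_eq {I J : Finset (Fin m)} {q x' : Fin m → Bool}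
    (hq : Cmon I J q = true)
    (hx : x' ∈ CSmin (dH m) q (Cmon I J)) :
    ∃ k0 ∈ I ∪ J, ∀ k, x' k = if k = k0 then !(q k) else q k := by
  obtain ⟨hne, hmin⟩ := hx
  rw [hq] at hne
  have hxneg : Cmon I J x' = false := by simpa using hne
  obtain ⟨hqI, hqJ⟩ := Cmon_true.mp hq
  have hviol : ∃ c ∈ I ∪ J, x' c ≠ q c := by
    have hnot := Cmon_false.mp hxneg
    rcases Decidable.not_and_iff_or_not.mp hnot with h | h
    · push_neg at h
      obtain ⟨i, hi, hxi⟩ := h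
      exact ⟨i, Finset.mem_union_left _ hi, by rw [hqI i hi]; simpa using hxi⟩
    · push_neg at h
      obtain ⟨j, hj, hxj⟩ := h
      exact ⟨j, Finset.mem_union_right _ hj, by rw [hqJ j hj]; simpa using hxj⟩
  obtain ⟨c, hc, hxc⟩ := hviol
  have hyneg : Cmon I J (Function.update q c (!(q c))) = false := by
    refine Cmon_false.mpr ?_
    rintro ⟨hA, hB⟩
    rcases Finset.mem_union.mp hc with hcI | hcJ
    · have := hA c hcI
      rw [Function.update_self, hqI c hcI] at this
      simp at this
    · have := hB c hcJ
      rw [Function.update_self, hqJ c hcJ] at this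
      simp at this
  have hle : hammingDist q x' ≤ 1 := by
    have h := hmin _ (by rw [hyneg, hq]; simp)
    have h2 : ((hammingDist q x' : ℕ) : ℝ≥0)
        ≤ ((hammingDist q (Function.update q c (!(q c))) : ℕ) : ℝ≥0) := h
    rw [hamming_update] at h2
    exact_mod_cast h2
  have hmain := eq_of_forced (S := {c}) (by
    intro k hk
    rw [Finset.mem_singleton] at hk
    subst hk
    exact (Ne.symm hxc)) (by simpa using hle)
  exact ⟨c, hc, fun k => by rw [hmain k]; simp⟩

lemma flip_mem_csmin (q : Fin m → Bool) (c : Fin m) (C : (Fin m → Bool) → Bool)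
    (hflip : C (Function.update q c (!(q c))) ≠ C q) :
    Function.update q c (!(q c)) ∈ CSmin (dH m) q C := by
  refine ⟨hflip, fun y hy => ?_⟩
  have hyq : y ≠ q := fun h => hy (by rw [h])
  have h1 : 0 < hammingDist q y := hammingDist_pos.mpr (Ne.symm hyq)
  have h2 : hammingDist q (Function.update q c (!(q c))) ≤ hammingDist q y := by
    rw [hamming_update]; omega
  exact_mod_cast h2

end Mon

lemma identifiable_two (m : ℕ) :
    Identifiable (id : (Fin m → Bool) → (Fin m → Bool))
      (fun x C _ => CSmin (dH m) x C) 2 (monClass m) := by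
  rw [show (2:ℕ) = 1+1 from rfl, Identifiable_succ]
  right
  refine ⟨(fun _ => true), fun Cstar hCs => ?_⟩
  obtain ⟨I, J, hIJ, hCeq⟩ := hCs
  have hCeq' : Cstar = Cmon I J := hCeq
  subst hCeq'
  constructor
  · -- the contrast set of the first query is empty: all consistent concepts are constant
    intro _
    rw [show (1:ℕ) = 0+1 from rfl, Identifiable_succ]
    left
    rintro C1 ⟨h1m, h1lab, h1cs⟩ C2 ⟨h2m, h2lab, h2cs⟩
    have const1 : ∀ b, C1 b = C1 (fun _ => true) := by
      intro b
      by_contra hb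
      exact (CSmin_nonempty _ _ _ ⟨b, hb⟩).ne_empty h1cs
    have const2 : ∀ b, C2 b = C2 (fun _ => true) := by
      intro b
      by_contra hb
      exact (CSmin_nonempty _ _ _ ⟨b, hb⟩).ne_empty h2cs
    simp only [id_eq] at h1lab h2lab
    funext b
    rw [const1 b, const2 b, h1lab, h2lab]
  · intro x' hx'
    rw [show (1:ℕ) = 0+1 from rfl, Identifiable_succ]
    right
    cases h1 : Cmon I J (fun _ => true) with
    | false =>
      have hform := csmin_false_eq hIJ h1 hx'
      have hxlab : Cmon I J x' = true := by
        have h := hx'.1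
        rw [h1] at h
        simpa using h
      have key : ∀ C, C ∈ monClass m → C (fun _ => true) = false →
          x' ∈ CSmin (dH m) (fun _ => true) C → C x' = true →
          ∃ J₂, Disjoint I J₂ ∧ C = Cmon I J₂ := by
        rintro C ⟨I₂, J₂, hd2, hCe⟩ hlab hcs hxl
        have hCe' : C = Cmon I₂ J₂ := hCe
        subst hCe'
        have hform2 := csmin_false_eq hd2 hlab hcs
        have hI2 : I₂ = I := by
          ext k
          have h := (hform k).symm.trans (hform2 k)
          by_cases hkI : k ∈ I <;> by_cases hkI2 : k ∈ I₂ <;> simp_all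
        subst hI2
        exact ⟨J₂, hd2, rfl⟩
      refine ⟨(fun _ => false), fun C' hC' => ?_⟩
      obtain ⟨hC'm, hC'lab, hC'cs, hC'xl⟩ := hC'
      simp only [id_eq] at hC'lab
      have hC'1 : C' (fun _ => true) = false := by rw [hC'lab, h1]
      have hC'x : C' x' = true := by rw [hC'xl, hxlab]
      obtain ⟨J₂, hd2, hCe⟩ := key C' hC'm hC'1 hC'cs hC'x
      subst hCe
      constructor
      · intro hE
        cases h0 : Cmon I J₂ (fun _ => false) with
        | false => exact absurd hE (CSmin_nonempty _ _ _ ⟨x', by rw [hC'x, h0]; simp⟩).ne_empty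
        | true => exact absurd hE (CSmin_nonempty _ _ _ ⟨(fun _ => true), by rw [hC'1, h0]; simp⟩).ne_empty
      · intro x'' hx''
        rw [Identifiable_zero]
        cases h0 : Cmon I J₂ (fun _ => false) with
        | true =>
          have uniqT : ∀ J₃ : Finset (Fin m), Cmon I J₃ (fun _ => false) = true → J₃ = ∅ := by
            intro J₃ h
            obtain ⟨-, hB⟩ := Cmon_true.mp h
            exact Finset.eq_empty_iff_forall_notMem.mpr (fun j hj => by simpa using hB j hj)
          rintro C1 ⟨⟨h1m, h1lab, h1cs, h1xl⟩, h1l0, -, -⟩ C2 ⟨⟨h2m, h2lab, h2cs, h2xl⟩, h2l0, -, -⟩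
          simp only [id_eq] at h1lab h2lab h1l0 h2l0
          obtain ⟨J₃, hd3, hCe3⟩ := key C1 h1m (by rw [h1lab, h1]) h1cs (by rw [h1xl, hxlab])
          obtain ⟨J₄, hd4, hCe4⟩ := key C2 h2m (by rw [h2lab, h1]) h2cs (by rw [h2xl, hxlab])
          subst hCe3; subst hCe4
          rw [uniqT J₃ (by rw [h1l0, h0]), uniqT J₄ (by rw [h2l0, h0])]
        | false =>
          have hform0 := csmin_false_eq hd2 h0 hx''
          have uniqJ : ∀ J₃ : Finset (Fin m), Disjoint I J₃ →
              Cmon I J₃ (fun _ => false) = false →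
              x'' ∈ CSmin (dH m) (fun _ => false) (Cmon I J₃) → J₃ = J₂ := by
            intro J₃ hd3 hl3 hcs3
            have hform3 := csmin_false_eq hd3 hl3 hcs3
            ext k
            have h := (hform3 k).symm.trans (hform0 k)
            by_cases hkI : k ∈ I
            · have h3 : k ∉ J₃ := Finset.disjoint_left.mp hd3 hkI
              have h2 : k ∉ J₂ := Finset.disjoint_left.mp hd2 hkI
              simp [h3, h2]
            · by_cases hk3 : k ∈ J₃ <;> by_cases hk2 : k ∈ J₂ <;> simp_all
          rintro C1 ⟨⟨h1m, h1lab, h1cs, h1xl⟩, h1l0, h1cs0, -⟩ C2 ⟨⟨h2m, h2lab, h2cs, h2xl⟩, h2l0, h2cs0, -⟩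
          simp only [id_eq] at h1lab h2lab h1l0 h2l0
          obtain ⟨J₃, hd3, hCe3⟩ := key C1 h1m (by rw [h1lab, h1]) h1cs (by rw [h1xl, hxlab])
          obtain ⟨J₄, hd4, hCe4⟩ := key C2 h2m (by rw [h2lab, h1]) h2cs (by rw [h2xl, hxlab])
          subst hCe3; subst hCe4
          rw [uniqJ J₃ hd3 (by rw [h1l0, h0]) h1cs0, uniqJ J₄ hd4 (by rw [h2l0, h0]) h2cs0]
    | true =>
      obtain ⟨k0, hk0, hform⟩ := csmin_true_eq h1 hx'
      have hI : I = ∅ := by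
        obtain ⟨hA, -⟩ := Cmon_true.mp h1
        exact Finset.eq_empty_iff_forall_notMem.mpr (fun i hi => by simpa using hA i hi)
      subst hI
      have hk0J : k0 ∈ J := by simpa using hk0
      have hxlab : Cmon (∅ : Finset (Fin m)) J x' = false := by
        have h := hx'.1
        rw [h1] at h
        simpa using h
      have hx'val : ∀ k, x' k = !(decide (k = k0)) := by
        intro k
        rw [hform k]
        by_cases hk : k = k0 <;> simp [hk]
      have key : ∀ C, C ∈ monClass m → C (fun _ => true) = true → C x' = false →
          ∃ J₂ : Finset (Fin m), k0 ∈ J₂ ∧ C = Cmon ∅ J₂ := by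
        rintro C ⟨I₂, J₂, hd2, hCe⟩ hT hF
        have hCe' : C = Cmon I₂ J₂ := hCe
        subst hCe'
        have hI₂ : I₂ = ∅ := by
          obtain ⟨hA, -⟩ := Cmon_true.mp hT
          exact Finset.eq_empty_iff_forall_notMem.mpr (fun i hi => by simpa using hA i hi)
        subst hI₂
        refine ⟨J₂, ?_, rfl⟩
        have hnot := Cmon_false.mp hF
        rcases Decidable.not_and_iff_or_not.mp hnot with h | h
        · push_neg at h; obtain ⟨i, hi, -⟩ := h; simp at hi
        · push_neg at h
          obtain ⟨j, hj, hxj⟩ := h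
          have hj0 : j = k0 := by
            by_contra hne
            rw [hx'val j] at hxj
            simp [hne] at hxj
          exact hj0 ▸ hj
      refine ⟨(fun k => decide (k = k0)), fun C' hC' => ?_⟩
      obtain ⟨hC'm, hC'lab, hC'cs, hC'xl⟩ := hC'
      simp only [id_eq] at hC'lab
      have hC'1 : C' (fun _ => true) = true := by rw [hC'lab, h1]
      have hC'x : C' x' = false := by rw [hC'xl, hxlab]
      obtain ⟨J₂, hk0J₂, hCe⟩ := key C' hC'm hC'1 hC'x
      subst hCe
      constructor
      · intro hE
        cases h0 : Cmon (∅ : Finset (Fin m)) J₂ (fun k => decide (k = k0)) with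
        | false => exact absurd hE (CSmin_nonempty _ _ _ ⟨(fun _ => true), by rw [hC'1, h0]; simp⟩).ne_empty
        | true => exact absurd hE (CSmin_nonempty _ _ _ ⟨x', by rw [hC'x, h0]; simp⟩).ne_empty
      · intro x'' hx''
        rw [Identifiable_zero]
        cases h0 : Cmon (∅ : Finset (Fin m)) J₂ (fun k => decide (k = k0)) with
        | true =>
          have uniqT : ∀ J₃ : Finset (Fin m), k0 ∈ J₃ →
              Cmon (∅ : Finset (Fin m)) J₃ (fun k => decide (k = k0)) = true → J₃ = {k0} := by
            intro J₃ hk3 h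
            obtain ⟨-, hB⟩ := Cmon_true.mp h
            refine Finset.eq_singleton_iff_unique_mem.mpr ⟨hk3, fun x hx => ?_⟩
            simpa using hB x hx
          rintro C1 ⟨⟨h1m, h1lab, h1cs, h1xl⟩, h1l0, -, -⟩ C2 ⟨⟨h2m, h2lab, h2cs, h2xl⟩, h2l0, -, -⟩
          simp only [id_eq] at h1lab h2lab h1l0 h2l0
          obtain ⟨J₃, hk3, hCe3⟩ := key C1 h1m (by rw [h1lab, h1]) (by rw [h1xl, hxlab])
          obtain ⟨J₄, hk4, hCe4⟩ := key C2 h2m (by rw [h2lab, h1]) (by rw [h2xl, hxlab])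
          subst hCe3; subst hCe4
          rw [uniqT J₃ hk3 (by rw [h1l0, h0]), uniqT J₄ hk4 (by rw [h2l0, h0])]
        | false =>
          have hform0 := csmin_false_eq (Finset.disjoint_empty_left J₂) h0 hx''
          have uniqJ : ∀ J₃ : Finset (Fin m), k0 ∈ J₃ →
              Cmon (∅ : Finset (Fin m)) J₃ (fun k => decide (k = k0)) = false →
              x'' ∈ CSmin (dH m) (fun k => decide (k = k0)) (Cmon ∅ J₃) → J₃ = J₂ := by
            intro J₃ hk3 hl3 hcs3
            have hform3 := csmin_false_eq (Finset.disjoint_empty_left J₃) hl3 hcs3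
            ext k
            have h := (hform3 k).symm.trans (hform0 k)
            by_cases hkk : k = k0
            · subst hkk; simp [hk3, hk0J₂]
            · by_cases hk3' : k ∈ J₃ <;> by_cases hk2 : k ∈ J₂ <;> simp_all
          rintro C1 ⟨⟨h1m, h1lab, h1cs, h1xl⟩, h1l0, h1cs0, -⟩ C2 ⟨⟨h2m, h2lab, h2cs, h2xl⟩, h2l0, h2cs0, -⟩
          simp only [id_eq] at h1lab h2lab h1l0 h2l0
          obtain ⟨J₃, hk3, hCe3⟩ := key C1 h1m (by rw [h1lab, h1]) (by rw [h1xl, hxlab])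
          obtain ⟨J₄, hk4, hCe4⟩ := key C2 h2m (by rw [h2lab, h1]) (by rw [h2xl, hxlab])
          subst hCe3; subst hCe4
          rw [uniqJ J₃ hk3 (by rw [h1l0, h0]) h1cs0, uniqJ J₄ hk4 (by rw [h2l0, h0]) h2cs0]

def Cagree {m : ℕ} (q : Fin m → Bool) (S : Finset (Fin m)) : (Fin m → Bool) → Bool :=
  fun b => decide (∀ k ∈ S, b k = q k)

lemma Cagree_mem {m : ℕ} (q : Fin m → Bool) (S : Finset (Fin m)) :
    Cagree q S ∈ monClass m := by
  refine ⟨S.filter (fun k => q k = false), S.filter (fun k => q k = true), ?_, ?_⟩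
  · rw [Finset.disjoint_left]
    intro a ha hb
    simp only [Finset.mem_filter] at ha hb
    rw [ha.2] at hb
    simp at hb
  · funext b
    simp only [Cagree]
    rw [decide_eq_decide]
    constructor
    · intro h
      constructor
      · intro i hi
        rw [Finset.mem_filter] at hi
        rw [h i hi.1, hi.2]
      · intro j hj
        rw [Finset.mem_filter] at hj
        rw [h j hj.1, hj.2]
    · rintro ⟨hA, hB⟩ k hk
      cases hqk : q k with
      | false => exact hA k (Finset.mem_filter.mpr ⟨hk, hqk⟩)
      | true => exact hB k (Finset.mem_filter.mpr ⟨hk, hqk⟩)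

lemma not_identifiable_one (m : ℕ) (hm : 2 ≤ m) :
    ¬ Identifiable (id : (Fin m → Bool) → (Fin m → Bool))
      (fun x C _ => CSmin (dH m) x C) 1 (monClass m) := by
  intro h
  have i0 : Fin m := ⟨0, by omega⟩
  rw [show (1:ℕ) = 0+1 from rfl, Identifiable_succ] at h
  rcases h with hsub | ⟨q, hq⟩
  · have heq := hsub (Cmon_mem (I := (∅ : Finset (Fin m))) (J := ∅) (by simp))
      (Cmon_mem (I := {⟨0, by omega⟩}) (J := ∅) (by simp))
    have := congrFun heq (fun _ => true)
    simp [Cmon] at this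
  · set i0 : Fin m := ⟨0, by omega⟩ with hi0def
    set i1 : Fin m := ⟨1, by omega⟩ with hi1def
    have hi01 : i0 ≠ i1 := by simp [hi0def, hi1def, Fin.ext_iff]
    set x' := Function.update q i0 (!(q i0)) with hx'def
    have hC1q : Cagree q {i0} q = true := by simp [Cagree]
    have hC2q : Cagree q {i0, i1} q = true := by simp [Cagree]
    have hC1x : Cagree q {i0} x' = false := by
      apply decide_eq_false
      intro hall
      have := hall i0 (by simp)
      rw [hx'def, Function.update_self] at this
      simp at this
    have hC2x : Cagree q {i0, i1} x' = false := by
      apply decide_eq_false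
      intro hall
      have := hall i0 (by simp)
      rw [hx'def, Function.update_self] at this
      simp at this
    have hmemx1 : x' ∈ CSmin (dH m) q (Cagree q {i0}) :=
      flip_mem_csmin q i0 _ (by rw [hC1x, hC1q]; simp)
    have hmemx2 : x' ∈ CSmin (dH m) q (Cagree q {i0, i1}) :=
      flip_mem_csmin q i0 _ (by rw [hC2x, hC2q]; simp)
    have hsub := (hq (Cagree q {i0}) (Cagree_mem q _)).2 x' hmemx1
    rw [Identifiable_zero] at hsub
    have heq : Cagree q {i0} = Cagree q {i0, i1} :=
      hsub ⟨Cagree_mem q _, rfl, hmemx1, rfl⟩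
        ⟨Cagree_mem q _, by simp only [id_eq]; rw [hC2q, hC1q], hmemx2, by rw [hC2x, hC1x]⟩
    have hy := congrFun heq (Function.update q i1 (!(q i1)))
    have hy1 : Cagree q {i0} (Function.update q i1 (!(q i1))) = true := by
      apply decide_eq_true
      intro k hk
      rw [Finset.mem_singleton] at hk
      subst hk
      rw [Function.update_of_ne hi01]
    have hy2 : Cagree q {i0, i1} (Function.update q i1 (!(q i1))) = false := by
      apply decide_eq_false
      intro hall
      have := hall i1 (by simp)
      rw [Function.update_self] at this
      simp at this
    rw [hy1, hy2] at hy
    simp at hy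


/-- For every `m ≥ 2`, the class of monomials over `m` Boolean
variables has minimum-distance contrast sample complexity exactly 2 under the
Hamming distance. -/
theorem statement7 (m : ℕ) (hm : 2 ≤ m) :
    Smin (fun a b => ((hammingDist a b : ℕ) : ℝ≥0)) (monClass m) = 2 := by
  unfold Smin sampleComplexity
  apply le_antisymm
  · apply sInf_le
    exact ⟨2, by norm_cast, identifiable_two m⟩
  · apply le_sInf
    rintro n ⟨k, rfl, hk⟩
    have hk2 : 2 ≤ k := by
      by_contra hlt
      push_neg at hlt
      interval_cases k
      · exact not_identifiable_one m hm (identifiable_mono _ _ 0 _ hk)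
      · exact not_identifiable_one m hm hk
    exact_mod_cast hk2
end

section
/- For every m ≥ 2, S^d_min(𝒞^m_mon ∪ 𝒞^m_claus) = 2, where d is the Hamming distance on {0,1}^m. -/
open scoped NNReal

/-- The class `𝒞^m_claus` of clauses over `m` Boolean variables in which each variable
occurs at most once: for disjoint `I, J ⊆ {1,…,m}`, the concept taking value 1 on `b`
iff `b i = 0` for some `i ∈ I` or `b j = 1` for some `j ∈ J`. -/
def clausClass (m : ℕ) : Set ((Fin m → Bool) → Bool) :=
  {C | ∃ I J : Finset (Fin m), Disjoint I J ∧
    C = fun b => decide ((∃ i ∈ I, b i = false) ∨ (∃ j ∈ J, b j = true))}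

open Finset

variable {m : ℕ}

def mono (I J : Finset (Fin m)) : (Fin m → Bool) → Bool :=
  fun b => decide ((∀ i ∈ I, b i = false) ∧ (∀ j ∈ J, b j = true))

def CSh (x : Fin m → Bool) (C : (Fin m → Bool) → Bool) : Set (Fin m → Bool) :=
  {x' | C x' ≠ C x ∧ ∀ x'', C x'' ≠ C x → hammingDist x x' ≤ hammingDist x x''}

def aa : Fin m → Bool := fun _ => true
def zz : Fin m → Bool := fun _ => false
def zerosF (w : Fin m → Bool) : Finset (Fin m) := univ.filter (fun k => w k = false)
def onesF (w : Fin m → Bool) : Finset (Fin m) := univ.filter (fun k => w k = true)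

lemma ham_aa (w : Fin m → Bool) : hammingDist aa w = (zerosF w).card := by
  unfold hammingDist zerosF
  congr 1
  ext k
  simp [aa]

lemma ham_zz (w : Fin m → Bool) : hammingDist zz w = (onesF w).card := by
  unfold hammingDist onesF
  congr 1
  ext k
  simp [zz, Ne, eq_comm (a := false)]

lemma mono_aa (I J : Finset (Fin m)) : mono I J aa = true ↔ I = ∅ := by
  simp [mono, aa, Finset.eq_empty_iff_forall_notMem]

lemma mono_zz (I J : Finset (Fin m)) : mono I J zz = true ↔ J = ∅ := by
  simp [mono, zz, Finset.eq_empty_iff_forall_notMem]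

def chi (J : Finset (Fin m)) : Fin m → Bool := fun k => decide (k ∈ J)
def chiC (I : Finset (Fin m)) : Fin m → Bool := fun k => decide (k ∉ I)

lemma zerosF_chiC (I : Finset (Fin m)) : zerosF (chiC I) = I := by
  ext k; simp [zerosF, chiC]

lemma onesF_chi (J : Finset (Fin m)) : onesF (chi J) = J := by
  ext k; simp [onesF, chi]

lemma mono_chiC {I J : Finset (Fin m)} (hd : Disjoint I J) : mono I J (chiC I) = true := by
  simp only [mono, decide_eq_true_eq, chiC]
  refine ⟨fun i hi => by simp [hi], fun j hj => by simp [Finset.disjoint_right.mp hd hj]⟩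

lemma mono_chi {I J : Finset (Fin m)} (hd : Disjoint I J) : mono I J (chi J) = true := by
  simp only [mono, decide_eq_true_eq, chi]
  refine ⟨fun i hi => by simp [Finset.disjoint_left.mp hd hi], fun j hj => by simp [hj]⟩

/-- L3: minimal contrast from all-ones, monomial with I ≠ ∅. -/
lemma zeros_eq_of_CSh_aa {I J : Finset (Fin m)} {x' : Fin m → Bool}
    (hd : Disjoint I J) (hI : I ≠ ∅) (hx' : x' ∈ CSh aa (mono I J)) :
    zerosF x' = I := by
  have haa : mono I J aa = false :=
    Bool.eq_false_iff.mpr (fun h => hI ((mono_aa I J).mp h))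
  obtain ⟨hne, hmin⟩ := hx'
  rw [haa] at hne
  have hpos : mono I J x' = true := Bool.ne_false_iff.mp hne
  simp only [mono, decide_eq_true_eq] at hpos
  have hsub : I ⊆ zerosF x' := fun i hi => by simp [zerosF, hpos.1 i hi]
  have hle : hammingDist aa x' ≤ hammingDist aa (chiC I) :=
    hmin _ (by rw [mono_chiC hd, haa]; simp)
  rw [ham_aa, ham_aa, zerosF_chiC] at hle
  exact (Finset.eq_of_subset_of_card_le hsub hle).symm

/-- L5: minimal contrast from all-zeros, monomial with J ≠ ∅. -/
lemma ones_eq_of_CSh_zz {I J : Finset (Fin m)} {x'' : Fin m → Bool}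
    (hd : Disjoint I J) (hJ : J ≠ ∅) (hx'' : x'' ∈ CSh zz (mono I J)) :
    onesF x'' = J := by
  have hzz : mono I J zz = false :=
    Bool.eq_false_iff.mpr (fun h => hJ ((mono_zz I J).mp h))
  obtain ⟨hne, hmin⟩ := hx''
  rw [hzz] at hne
  have hpos : mono I J x'' = true := Bool.ne_false_iff.mp hne
  simp only [mono, decide_eq_true_eq] at hpos
  have hsub : J ⊆ onesF x'' := fun j hj => by simp [onesF, hpos.2 j hj]
  have hle : hammingDist zz x'' ≤ hammingDist zz (chi J) :=
    hmin _ (by rw [mono_chi hd, hzz]; simp)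
  rw [ham_zz, ham_zz, onesF_chi] at hle
  exact (Finset.eq_of_subset_of_card_le hsub hle).symm

lemma zerosF_update_aa (j : Fin m) : zerosF (Function.update aa j false) = {j} := by
  ext k
  simp only [zerosF, Finset.mem_filter, Finset.mem_univ, true_and, Finset.mem_singleton]
  rcases eq_or_ne k j with rfl | h
  · simp
  · simp [Function.update_of_ne h, aa, h]

lemma onesF_update_zz (i : Fin m) : onesF (Function.update zz i true) = {i} := by
  ext k
  simp only [onesF, Finset.mem_filter, Finset.mem_univ, true_and, Finset.mem_singleton]
  rcases eq_or_ne k i with rfl | h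
  · simp
  · simp [Function.update_of_ne h, zz, h]

/-- L4: minimal contrast from all-ones, monomial with I = ∅. -/
lemma zeros_singleton_of_CSh_aa {J : Finset (Fin m)} {x' : Fin m → Bool}
    (hx' : x' ∈ CSh aa (mono ∅ J)) :
    ∃ j ∈ J, zerosF x' = {j} := by
  have haa : mono (∅ : Finset (Fin m)) J aa = true := (mono_aa ∅ J).mpr rfl
  obtain ⟨hne, hmin⟩ := hx'
  rw [haa] at hne
  have hneg : mono ∅ J x' = false := Bool.not_eq_true _ ▸ Bool.eq_false_iff.mpr hne
  simp only [mono, decide_eq_false_iff_not, not_and, not_forall] at hneg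
  obtain ⟨j, hj, hxj⟩ := hneg (by simp)
  have hxj : x' j = false := by revert hxj; cases x' j <;> simp
  refine ⟨j, hj, ?_⟩
  have hw : mono (∅ : Finset (Fin m)) J (Function.update aa j false) ≠ mono ∅ J aa := by
    rw [haa]
    simp only [mono, ne_eq, decide_eq_true_eq, not_and, not_forall]
    intro _
    exact ⟨j, hj, by simp⟩
  have hle := hmin _ hw
  rw [ham_aa, ham_aa, zerosF_update_aa] at hle
  have hsub : ({j} : Finset (Fin m)) ⊆ zerosF x' := by simp [zerosF, hxj]
  exact (Finset.eq_of_subset_of_card_le hsub (le_trans hle (by simp))).symm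

/-- L6: minimal contrast from all-zeros, monomial with J = ∅. -/
lemma ones_singleton_of_CSh_zz {I : Finset (Fin m)} {x'' : Fin m → Bool}
    (hx'' : x'' ∈ CSh zz (mono I ∅)) :
    ∃ i ∈ I, onesF x'' = {i} := by
  have hzz : mono I (∅ : Finset (Fin m)) zz = true := (mono_zz I ∅).mpr rfl
  obtain ⟨hne, hmin⟩ := hx''
  rw [hzz] at hne
  have hneg : mono I ∅ x'' = false := Bool.not_eq_true _ ▸ Bool.eq_false_iff.mpr hne
  have hex : ∃ i ∈ I, x'' i = true := by
    by_contra h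
    push_neg at h
    have htr : mono I (∅ : Finset (Fin m)) x'' = true := by
      simp only [mono, decide_eq_true_eq]
      exact ⟨fun i hi => Bool.not_eq_true _ ▸ (h i hi), by simp⟩
    rw [htr] at hneg
    exact absurd hneg (by simp)
  obtain ⟨i, hi, hxi⟩ := hex
  refine ⟨i, hi, ?_⟩
  have hw : mono I (∅ : Finset (Fin m)) (Function.update zz i true) ≠ mono I ∅ zz := by
    rw [hzz]
    simp only [mono, ne_eq, decide_eq_true_eq, not_and, not_forall]
    intro h
    exact absurd (h i hi) (by simp)
  have hle := hmin _ hw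
  rw [ham_zz, ham_zz, onesF_update_zz] at hle
  have hsub : ({i} : Finset (Fin m)) ⊆ onesF x'' := by simp [onesF, hxi]
  exact (Finset.eq_of_subset_of_card_le hsub (le_trans hle (by simp))).symm

lemma CSh_not (x : Fin m → Bool) (C : (Fin m → Bool) → Bool) :
    CSh x (fun b => !(C b)) = CSh x C := by
  ext x'
  have h : ∀ b c : Bool, ((!b) ≠ (!c)) ↔ (b ≠ c) := by decide
  simp only [CSh, Set.mem_setOf_eq, h]

/-- Nonemptiness of min-distance contrast sets. -/
lemma CSh_nonempty {x w : Fin m → Bool} {C : (Fin m → Bool) → Bool}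
    (hw : C w ≠ C x) : (CSh x C).Nonempty := by
  classical
  have hs : (univ.filter (fun v => C v ≠ C x)).Nonempty := ⟨w, by simp [hw]⟩
  obtain ⟨v, hv, hvmin⟩ := Finset.exists_min_image _ (fun v => hammingDist x v) hs
  simp only [Finset.mem_filter, Finset.mem_univ, true_and] at hv
  exact ⟨v, hv, fun u hu => hvmin u (by simp [hu])⟩

lemma const_of_CSh_empty {x : Fin m → Bool} {C : (Fin m → Bool) → Bool}
    (h : CSh x C = ∅) : ∀ w, C w = C x := by
  intro w
  by_contra hw
  obtain ⟨v, hv⟩ := CSh_nonempty (x := x) (w := w) hw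
  rw [h] at hv
  exact hv

lemma mono_aa_false (I J : Finset (Fin m)) : mono I J aa = false ↔ I ≠ ∅ := by
  rw [Bool.eq_false_iff]; exact not_congr (mono_aa I J)

lemma mono_zz_false (I J : Finset (Fin m)) : mono I J zz = false ↔ J ≠ ∅ := by
  rw [Bool.eq_false_iff]; exact not_congr (mono_zz I J)

lemma eq_mono_mono {I J I' J' : Finset (Fin m)} {x' x'' : Fin m → Bool}
    (hd : Disjoint I J) (hd' : Disjoint I' J')
    (ha : mono I J aa = mono I' J' aa) (hz : mono I J zz = mono I' J' zz)
    (hx1 : x' ∈ CSh aa (mono I J)) (hx1' : x' ∈ CSh aa (mono I' J'))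
    (hx2 : x'' ∈ CSh zz (mono I J)) (hx2' : x'' ∈ CSh zz (mono I' J')) :
    I = I' ∧ J = J' := by
  cases h : mono I J aa with
  | true =>
    have hI : I = ∅ := (mono_aa I J).mp h
    have hI' : I' = ∅ := (mono_aa I' J').mp (ha ▸ h)
    subst hI; subst hI'
    obtain ⟨j, hj, -⟩ := zeros_singleton_of_CSh_aa hx1
    obtain ⟨j', hj', -⟩ := zeros_singleton_of_CSh_aa hx1'
    have hJ := ones_eq_of_CSh_zz hd (Finset.ne_empty_of_mem hj) hx2
    have hJ' := ones_eq_of_CSh_zz hd' (Finset.ne_empty_of_mem hj') hx2'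
    exact ⟨rfl, hJ ▸ hJ'⟩
  | false =>
    have hI : I ≠ ∅ := (mono_aa_false I J).mp h
    have hI' : I' ≠ ∅ := (mono_aa_false I' J').mp (ha ▸ h)
    have hII' : I = I' :=
      (zeros_eq_of_CSh_aa hd hI hx1) ▸ (zeros_eq_of_CSh_aa hd' hI' hx1')
    refine ⟨hII', ?_⟩
    cases h2 : mono I J zz with
    | true =>
      have hJ : J = ∅ := (mono_zz I J).mp h2
      have hJ' : J' = ∅ := (mono_zz I' J').mp (hz ▸ h2)
      rw [hJ, hJ']
    | false =>
      have hJ : J ≠ ∅ := (mono_zz_false I J).mp h2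
      have hJ' : J' ≠ ∅ := (mono_zz_false I' J').mp (hz ▸ h2)
      exact (ones_eq_of_CSh_zz hd hJ hx2) ▸ (ones_eq_of_CSh_zz hd' hJ' hx2')

lemma lit_eq_not_lit (j : Fin m) :
    mono (∅ : Finset (Fin m)) {j} = fun b => !(mono {j} ∅ b) := by
  funext b
  cases hb : b j <;> simp [mono, hb]

lemma eq_mono_not_mono {I J I' J' : Finset (Fin m)} {x' x'' : Fin m → Bool}
    (hd : Disjoint I J) (hd' : Disjoint I' J')
    (ha : mono I J aa = !(mono I' J' aa)) (hz : mono I J zz = !(mono I' J' zz))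
    (hx1 : x' ∈ CSh aa (mono I J)) (hx1' : x' ∈ CSh aa (mono I' J'))
    (hx2 : x'' ∈ CSh zz (mono I J)) (hx2' : x'' ∈ CSh zz (mono I' J')) :
    mono I J = fun b => !(mono I' J' b) := by
  cases h : mono I J aa with
  | true =>
    have hI : I = ∅ := (mono_aa I J).mp h
    have hI' : I' ≠ ∅ := (mono_aa_false I' J').mp (by
      have := ha ▸ h
      revert this; cases mono I' J' aa <;> simp)
    subst hI
    obtain ⟨j, hj, hzx⟩ := zeros_singleton_of_CSh_aa hx1
    have hIj : I' = {j} := (zeros_eq_of_CSh_aa hd' hI' hx1') ▸ hzx.symm ▸ rfl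
    have hJne : J ≠ ∅ := Finset.ne_empty_of_mem hj
    have hmz : mono (∅ : Finset (Fin m)) J zz = false := (mono_zz_false ∅ J).mpr hJne
    have hJ' : J' = ∅ := (mono_zz I' J').mp (by
      have := hz ▸ hmz
      revert this; cases mono I' J' zz <;> simp)
    subst hJ'
    obtain ⟨i, hi, hox⟩ := ones_singleton_of_CSh_zz hx2'
    have hij : i = j := by
      rw [hIj] at hi; exact Finset.mem_singleton.mp hi
    subst hij
    have hJ : J = {i} := (ones_eq_of_CSh_zz hd hJne hx2) ▸ hox.symm ▸ rfl
    rw [hJ, hIj]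
    exact lit_eq_not_lit i
  | false =>
    have hI : I ≠ ∅ := (mono_aa_false I J).mp h
    have hI' : I' = ∅ := (mono_aa I' J').mp (by
      have := ha ▸ h
      revert this; cases mono I' J' aa <;> simp)
    subst hI'
    obtain ⟨j, hj, hzx⟩ := zeros_singleton_of_CSh_aa hx1'
    have hIj : I = {j} := (zeros_eq_of_CSh_aa hd hI hx1) ▸ hzx.symm ▸ rfl
    have hJne' : J' ≠ ∅ := Finset.ne_empty_of_mem hj
    have hmz : mono (∅ : Finset (Fin m)) J' zz = false := (mono_zz_false ∅ J').mpr hJne'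
    have hJ : J = ∅ := (mono_zz I J).mp (by rw [hz, hmz]; rfl)
    subst hJ
    obtain ⟨i, hi, hox⟩ := ones_singleton_of_CSh_zz hx2
    have hij : i = j := by
      rw [hIj] at hi; exact Finset.mem_singleton.mp hi
    subst hij
    have hJ' : J' = {i} := (ones_eq_of_CSh_zz hd' hJne' hx2') ▸ hox.symm ▸ rfl
    rw [hJ', hIj]
    funext b
    cases hb : b i <;> simp [mono, hb]

lemma clause_eq_not_mono (I J : Finset (Fin m)) :
    (fun b => decide ((∃ i ∈ I, b i = false) ∨ (∃ j ∈ J, b j = true)))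
      = fun b => !(mono J I b) := by
  funext b
  rw [mono, ← decide_not]
  apply decide_eq_decide.mpr
  push_neg
  constructor
  · rintro (⟨i, hi, hbi⟩ | ⟨j, hj, hbj⟩) hall
    · exact ⟨i, hi, by simp [hbi]⟩
    · exact absurd (hall j hj) (by simp [hbj])
  · intro h
    by_cases hall : ∀ j ∈ J, b j = false
    · obtain ⟨i, hi, hbi⟩ := h hall
      exact Or.inl ⟨i, hi, by simpa using hbi⟩
    · push_neg at hall
      obtain ⟨j, hj, hbj⟩ := hall
      exact Or.inr ⟨j, hj, by simpa using hbj⟩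

lemma class_repr {C : (Fin m → Bool) → Bool} (hC : C ∈ monClass m ∪ clausClass m) :
    ∃ I J : Finset (Fin m), Disjoint I J ∧
      (C = mono I J ∨ C = fun b => !(mono I J b)) := by
  rcases hC with ⟨I, J, hd, rfl⟩ | ⟨I, J, hd, rfl⟩
  · exact ⟨I, J, hd, Or.inl rfl⟩
  · exact ⟨J, I, hd.symm, Or.inr (clause_eq_not_mono I J)⟩

lemma core {C C' : (Fin m → Bool) → Bool} {x' x'' : Fin m → Bool}
    (hC : C ∈ monClass m ∪ clausClass m) (hC' : C' ∈ monClass m ∪ clausClass m)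
    (ha : C aa = C' aa) (hz : C zz = C' zz)
    (hx1 : x' ∈ CSh aa C) (hx1' : x' ∈ CSh aa C')
    (hx2 : x'' ∈ CSh zz C) (hx2' : x'' ∈ CSh zz C') : C = C' := by
  obtain ⟨I, J, hd, hrep⟩ := class_repr hC
  obtain ⟨I', J', hd', hrep'⟩ := class_repr hC'
  rcases hrep with rfl | rfl <;> rcases hrep' with rfl | rfl
  · obtain ⟨h1, h2⟩ := eq_mono_mono hd hd' ha hz hx1 hx1' hx2 hx2'
    rw [h1, h2]
  · rw [CSh_not] at hx1' hx2'
    exact eq_mono_not_mono hd hd' ha hz hx1 hx1' hx2 hx2'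
  · rw [CSh_not] at hx1 hx2
    have := eq_mono_not_mono hd' hd
      (by rw [← ha]) (by rw [← hz]) hx1' hx1 hx2' hx2
    rw [this]
  · rw [CSh_not] at hx1 hx2 hx1' hx2'
    have ha' : mono I J aa = mono I' J' aa := by
      have := ha; simp only at this; exact Bool.not_inj this
    have hz' : mono I J zz = mono I' J' zz := by
      have := hz; simp only at this; exact Bool.not_inj this
    obtain ⟨h1, h2⟩ := eq_mono_mono hd hd' ha' hz' hx1 hx1' hx2 hx2'
    rw [h1, h2]

lemma CSmin_dH (x : Fin m → Bool) (C : (Fin m → Bool) → Bool) :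
    CSmin (fun a b => ((hammingDist a b : ℕ) : ℝ≥0)) x C = CSh x C := by
  ext w
  simp [CSmin, CSh, Nat.cast_le]

lemma id2 (m : ℕ) :
    Identifiable (id : (Fin m → Bool) → (Fin m → Bool))
      (fun x C _ => CSmin (fun a b => ((hammingDist a b : ℕ) : ℝ≥0)) x C) 2
      (monClass m ∪ clausClass m) := by
  refine Or.inr ⟨aa, fun Cstar hCstar => ⟨?_, ?_⟩⟩
  · intro _
    refine Or.inl ?_
    intro C hC C2 hC2
    obtain ⟨hCV, hCa, hCemp⟩ := hC
    obtain ⟨hC2V, hC2a, hC2emp⟩ := hC2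
    simp only [CSmin_dH, id_eq] at hCemp hC2emp hCa hC2a
    funext w
    rw [const_of_CSh_empty hCemp w, const_of_CSh_empty hC2emp w, hCa, hC2a]
  · intro x' hx'
    simp only [CSmin_dH] at hx'
    refine Or.inr ⟨zz, fun C2 hC2 => ⟨?_, ?_⟩⟩
    · intro hemp
      exfalso
      obtain ⟨hC2V, hC2a, hC2x', hC2lbl⟩ := hC2
      simp only [CSmin_dH] at hC2x' hemp
      have hconst := const_of_CSh_empty hemp
      exact hC2x'.1 (by rw [hconst x', hconst aa])
    · intro x'' hx''
      intro C hC C' hC'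
      obtain ⟨⟨hCV, hCa, hCx1, hCl1⟩, hCz, hCx2, hCl2⟩ := hC
      obtain ⟨⟨hC'V, hC'a, hC'x1, hC'l1⟩, hC'z, hC'x2, hC'l2⟩ := hC'
      simp only [CSmin_dH, id_eq] at hCa hCx1 hCz hCx2 hC'a hC'x1 hC'z hC'x2
      exact core hCV hC'V (hCa.trans hC'a.symm) (hCz.trans hC'z.symm)
        hCx1 hC'x1 hCx2 hC'x2

/-- The monomial matching `q` on coordinates in `S`. -/
lemma match_disjoint (S : Finset (Fin m)) (q : Fin m → Bool) :
    Disjoint (S.filter (fun k => q k = false)) (S.filter (fun k => q k = true)) := by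
  rw [Finset.disjoint_left]
  intro k hk hk'
  simp only [Finset.mem_filter] at hk hk'
  rw [hk.2] at hk'
  exact absurd hk'.2 (by simp)

lemma match_eval (S : Finset (Fin m)) (q b : Fin m → Bool) :
    mono (S.filter (fun k => q k = false)) (S.filter (fun k => q k = true)) b = true
      ↔ ∀ k ∈ S, b k = q k := by
  simp only [mono, decide_eq_true_eq, Finset.mem_filter]
  constructor
  · rintro ⟨h1, h2⟩ k hk
    cases hqk : q k with
    | false => exact h1 k ⟨hk, hqk⟩
    | true => exact h2 k ⟨hk, hqk⟩
  · intro h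
    exact ⟨fun k hk => (h k hk.1).trans hk.2, fun k hk => (h k hk.1).trans hk.2⟩

lemma ham_update_one (q : Fin m → Bool) (i : Fin m) :
    hammingDist q (Function.update q i (!(q i))) = 1 := by
  unfold hammingDist
  rw [show (1 : ℕ) = ({i} : Finset (Fin m)).card from rfl]
  congr 1
  ext k
  rcases eq_or_ne k i with rfl | h
  · simp
  · simp [Function.update_of_ne h, h]

lemma mem_CSh_update {q : Fin m → Bool} {C : (Fin m → Bool) → Bool} {i : Fin m}
    (hlbl : C (Function.update q i (!(q i))) ≠ C q) :
    Function.update q i (!(q i)) ∈ CSh q C := by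
  refine ⟨hlbl, fun w hw => ?_⟩
  rw [ham_update_one]
  refine Nat.one_le_iff_ne_zero.mpr (fun h0 => ?_)
  rw [hammingDist_eq_zero] at h0
  exact hw (by rw [h0])

lemma not_sub (m : ℕ) : ¬ (monClass m ∪ clausClass m).Subsingleton := by
  intro h
  have h1 : mono (∅ : Finset (Fin m)) ∅ ∈ monClass m ∪ clausClass m :=
    Or.inl ⟨∅, ∅, by simp, rfl⟩
  have h0 : (fun b : Fin m → Bool => decide ((∃ i ∈ (∅ : Finset (Fin m)), b i = false) ∨
      (∃ j ∈ (∅ : Finset (Fin m)), b j = true))) ∈ monClass m ∪ clausClass m :=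
    Or.inr ⟨∅, ∅, by simp, rfl⟩
  have := congrFun (h h1 h0) aa
  simp [mono] at this

lemma not_id1 (m : ℕ) (hm : 2 ≤ m) :
    ¬ Identifiable (id : (Fin m → Bool) → (Fin m → Bool))
      (fun x C _ => CSmin (fun a b => ((hammingDist a b : ℕ) : ℝ≥0)) x C) 1
      (monClass m ∪ clausClass m) := by
  intro h
  rcases h with h | ⟨q, hq⟩
  · exact not_sub m h
  · set i0 : Fin m := ⟨0, by omega⟩ with hi0
    set i1 : Fin m := ⟨1, by omega⟩ with hi1
    have hne : i0 ≠ i1 := by simp [hi0, hi1, Fin.ext_iff]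
    set Cpair := mono (({i0, i1} : Finset (Fin m)).filter (fun k => q k = false))
      (({i0, i1} : Finset (Fin m)).filter (fun k => q k = true)) with hCpair
    set Clit := mono (({i0} : Finset (Fin m)).filter (fun k => q k = false))
      (({i0} : Finset (Fin m)).filter (fun k => q k = true)) with hClit
    set x' := Function.update q i0 (!(q i0)) with hx'def
    have hx'i0 : x' i0 = !(q i0) := Function.update_self _ _ _
    have hx'i1 : x' i1 = q i1 := Function.update_of_ne (Ne.symm hne) _ _
    have hCpq : Cpair q = true := (match_eval _ q q).mpr (fun k _ => rfl)
    have hClq : Clit q = true := (match_eval _ q q).mpr (fun k _ => rfl)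
    have hCpx' : Cpair x' = false := by
      apply Bool.eq_false_iff.mpr
      intro htrue
      have := (match_eval _ q x').mp htrue i0 (by simp)
      rw [hx'i0] at this
      exact absurd this (by cases q i0 <;> simp)
    have hClx' : Clit x' = false := by
      apply Bool.eq_false_iff.mpr
      intro htrue
      have := (match_eval _ q x').mp htrue i0 (by simp)
      rw [hx'i0] at this
      exact absurd this (by cases q i0 <;> simp)
    have hCpmem : Cpair ∈ monClass m ∪ clausClass m :=
      Or.inl ⟨_, _, match_disjoint _ q, rfl⟩
    have hClmem : Clit ∈ monClass m ∪ clausClass m :=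
      Or.inl ⟨_, _, match_disjoint _ q, rfl⟩
    have hx'Cp : x' ∈ CSh q Cpair := mem_CSh_update (by rw [hCpx', hCpq]; simp)
    have hx'Cl : x' ∈ CSh q Clit := mem_CSh_update (by rw [hClx', hClq]; simp)
    have h2 := (hq Cpair hCpmem).2 x' (by simpa only [CSmin_dH] using hx'Cp)
    -- h2 : Subsingleton of the refined version space
    have heq : Cpair = Clit := by
      apply h2
      · exact ⟨hCpmem, rfl, by simpa only [CSmin_dH] using hx'Cp, rfl⟩
      · refine ⟨hClmem, ?_, by simpa only [CSmin_dH] using hx'Cl, by rw [hClx', hCpx']⟩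
        simp only [id_eq]
        rw [hClq, hCpq]
    have hw := congrFun heq (Function.update q i1 (!(q i1)))
    have hCpw : Cpair (Function.update q i1 (!(q i1))) = false := by
      apply Bool.eq_false_iff.mpr
      intro htrue
      have := (match_eval _ q _).mp htrue i1 (by simp)
      rw [Function.update_self] at this
      exact absurd this (by cases q i1 <;> simp)
    have hClw : Clit (Function.update q i1 (!(q i1))) = true := by
      apply (match_eval _ q _).mpr
      intro k hk
      rw [Finset.mem_singleton] at hk
      subst hk
      exact Function.update_of_ne hne _ _
    rw [hCpw, hClw] at hw
    exact absurd hw (by simp)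


/-- For every `m ≥ 2`,
`S^d_min(𝒞^m_mon ∪ 𝒞^m_claus) = 2` under the Hamming distance. -/
theorem statement8 (m : ℕ) (hm : 2 ≤ m) :
    Smin (fun a b => ((hammingDist a b : ℕ) : ℝ≥0)) (monClass m ∪ clausClass m) = 2 := by
  rw [Smin, sampleComplexity]
  apply le_antisymm
  · exact sInf_le ⟨2, by norm_num, id2 m⟩
  · apply le_sInf
    rintro n ⟨k, rfl, hk⟩
    have hk2 : 2 ≤ k := by
      by_contra hlt
      push_neg at hlt
      interval_cases k
      · exact not_sub m hk
      · exact not_id1 m hm hk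
    exact_mod_cast hk2
end

section
/- For every m ≥ 1, the class 𝒞^m_parity of parity functions over {0,1}^m satisfies: S[MQ](𝒞^m_parity) = m, S^d_min(𝒞^m_parity) = S^d_prox(𝒞^m_parity), and m − 1 ≤ S^d_min(𝒞^m_parity) ≤ m, where d is the Hamming distance. -/
open scoped NNReal

/-- The class of parity functions over `{0,1}^m`: for each `I ⊆ {1,…,m}`, the concept
`b ↦ ⊕_{i ∈ I} b i`. -/
def parityClass (m : ℕ) : Set ((Fin m → Bool) → Bool) :=
  {C | ∃ I : Finset (Fin m),
    C = fun b => decide (Odd (I.filter fun i => b i = true).card)}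

section Sim
variable {X Q1 Q2 : Type*}

lemma Identifiable_sim (pt1 : Q1 → X) (pt2 : Q2 → X)
    (CS1 : Q1 → (X → Bool) → Set X) (CS2 : Q2 → (X → Bool) → Set X)
    (𝓒 : Set (X → Bool))
    (h : ∀ q2 : Q2, ∃ q1 : Q1, pt1 q1 = pt2 q2 ∧
      ((∀ C ∈ 𝓒, CS2 q2 C = ∅) ∨
       (∀ C ∈ 𝓒, CS1 q1 C ⊆ CS2 q2 C ∧ (CS1 q1 C = ∅ → CS2 q2 C = ∅)))) :
    ∀ n (V V' : Set (X → Bool)), V' ⊆ V → V ⊆ 𝓒 →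
      Identifiable pt2 (fun q C _ => CS2 q C) n V →
      Identifiable pt1 (fun q C _ => CS1 q C) n V' := by
  intro n
  induction n with
  | zero => exact fun V V' hVV hC hI => hI.anti hVV
  | succ n ih =>
    intro V V' hVV hC hI
    rcases hI with hss | ⟨q2, hq2⟩
    · exact Or.inl (hss.anti hVV)
    · obtain ⟨q1, hpt, hreg⟩ := h q2
      refine Or.inr ⟨q1, ?_⟩
      intro Cs hCs
      have hCsV : Cs ∈ V := hVV hCs
      rcases hreg with hB | hA
      · have h2 := (hq2 Cs hCsV).1 (hB Cs (hC hCsV))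
        constructor
        · intro _
          refine ih _ _ (fun C hC' => ?_) (fun C hC' => hC hC'.1) h2
          exact ⟨hVV hC'.1, by rw [hpt] at hC'; exact hC'.2.1, hB C (hC (hVV hC'.1))⟩
        · intro x' hx'
          refine ih _ _ (fun C hC' => ?_) (fun C hC' => hC hC'.1) h2
          exact ⟨hVV hC'.1, by rw [hpt] at hC'; exact hC'.2.1, hB C (hC (hVV hC'.1))⟩
      · constructor
        · intro hemp
          have h2 := (hq2 Cs hCsV).1 ((hA Cs (hC hCsV)).2 hemp)
          refine ih _ _ (fun C hC' => ?_) (fun C hC' => hC hC'.1) h2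
          exact ⟨hVV hC'.1, by rw [hpt] at hC'; exact hC'.2.1,
            (hA C (hC (hVV hC'.1))).2 hC'.2.2⟩
        · intro x' hx'
          have h2 := (hq2 Cs hCsV).2 x' ((hA Cs (hC hCsV)).1 hx')
          refine ih _ _ (fun C hC' => ?_) (fun C hC' => hC hC'.1) h2
          exact ⟨hVV hC'.1, by rw [hpt] at hC'; exact hC'.2.1,
            (hA C (hC (hVV hC'.1))).1 hC'.2.2.1, hC'.2.2.2⟩

end Sim

lemma Identifiable_mq_list {X : Type*} :
    ∀ (L : List X) (V : Set (X → Bool)),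
      (∀ C ∈ V, ∀ C' ∈ V, (∀ x ∈ L, C x = C' x) → C = C') →
      Identifiable (id : X → X) (fun _ _ _ => (∅ : Set X)) L.length V := by
  intro L
  induction L with
  | nil =>
    intro V h C hC C' hC'
    exact h C hC C' hC' (by simp)
  | cons x L ih =>
    intro V h
    refine Or.inr ⟨x, fun Cs hCs => ⟨fun _ => ?_, fun x' hx' => absurd hx' (by simp)⟩⟩
    refine ih _ ?_
    rintro C ⟨hCV, hCx, -⟩ C' ⟨hC'V, hC'x, -⟩ hagree
    refine h C hCV C' hC'V ?_
    intro z hz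
    rcases List.mem_cons.mp hz with rfl | hz
    · exact hCx.trans hC'x.symm
    · exact hagree z hz

lemma mq_card {X : Type*} :
    ∀ (n : ℕ) (V : Set (X → Bool)) (S : Finset (X → Bool)),
      ↑S ⊆ V → Identifiable (id : X → X) (fun _ _ _ => (∅ : Set X)) n V →
      S.card ≤ 2 ^ n := by
  intro n
  induction n with
  | zero =>
    intro V S hSV hI
    simpa using Finset.card_le_one.mpr fun a ha b hb => hI (hSV ha) (hSV hb)
  | succ n ih =>
    intro V S hSV hI
    classical
    rcases hI with hss | ⟨x, hx⟩
    · calc S.card ≤ 1 := Finset.card_le_one.mpr fun a ha b hb => hss (hSV ha) (hSV hb)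
        _ ≤ 2 ^ (n + 1) := Nat.one_le_two_pow
    · have key : ∀ b : Bool, (S.filter (fun C => C x = b)).card ≤ 2 ^ n := by
        intro b
        rcases (S.filter (fun C => C x = b)).eq_empty_or_nonempty with he | ⟨Cs, hCs⟩
        · simp [he]
        · have hCsf := Finset.mem_filter.mp hCs
          have h2 := (hx Cs (hSV hCsf.1)).1 rfl
          refine ih _ _ (fun C hC => ?_) h2
          have hCf := Finset.mem_filter.mp hC
          exact ⟨hSV hCf.1, by simp only [id] ; rw [hCf.2, hCsf.2], rfl⟩
      have hfe : S.filter (fun a => ¬ a x = true) = S.filter (fun C => C x = false) := by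
        apply Finset.filter_congr
        intro C _
        simp
      have hsplit := Finset.card_filter_add_card_filter_not (s := S)
        (p := fun C => C x = true)
      rw [hfe] at hsplit
      have h1 := key true
      have h2 := key false
      rw [pow_succ, ← hsplit, mul_two]
      exact Nat.add_le_add h1 h2

def pfun {m : ℕ} (I : Finset (Fin m)) : (Fin m → Bool) → Bool :=
  fun b => decide (Odd (I.filter fun i => b i = true).card)

lemma pfun_mem_parityClass {m : ℕ} (I : Finset (Fin m)) : pfun I ∈ parityClass m := ⟨I, rfl⟩

lemma mem_parityClass_iff {m : ℕ} {C : (Fin m → Bool) → Bool} :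
    C ∈ parityClass m ↔ ∃ I : Finset (Fin m), C = pfun I := Iff.rfl

lemma pfun_update {m : ℕ} (I : Finset (Fin m)) {i : Fin m} (hi : i ∈ I) (x : Fin m → Bool) :
    pfun I (Function.update x i (!x i)) = ! pfun I x := by
  classical
  have hodd : Odd ((I.filter fun j => Function.update x i (!x i) j = true).card) ↔
      ¬ Odd ((I.filter fun j => x j = true).card) := by
    rcases Bool.dichotomy (x i) with hxi | hxi
    case inr =>
      have hiA : i ∈ I.filter fun j => x j = true := Finset.mem_filter.mpr ⟨hi, hxi⟩
      have hAe : (I.filter fun j => Function.update x i (!x i) j = true)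
          = (I.filter fun j => x j = true).erase i := by
        ext j
        simp only [Finset.mem_erase, Finset.mem_filter]
        rcases eq_or_ne j i with rfl | hj
        · simp [Function.update_self, hxi]
        · simp [Function.update_of_ne hj, hj]
      rw [hAe, Finset.card_erase_of_mem hiA]
      have h1 : 1 ≤ (I.filter fun j => x j = true).card := Finset.card_pos.mpr ⟨i, hiA⟩
      rw [Nat.odd_iff, Nat.odd_iff]
      omega
    case inl =>
      have hiA : i ∉ I.filter fun j => x j = true := by simp [hxi]
      have hAe : (I.filter fun j => Function.update x i (!x i) j = true)
          = insert i (I.filter fun j => x j = true) := by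
        ext j
        simp only [Finset.mem_insert, Finset.mem_filter]
        rcases eq_or_ne j i with rfl | hj
        · simp [Function.update_self, hxi, hi]
        · simp [Function.update_of_ne hj, hj]
      rw [hAe, Finset.card_insert_of_notMem hiA]
      rw [Nat.odd_iff, Nat.odd_iff]
      omega
  simp only [pfun, hodd, decide_not]

lemma pfun_basis {m : ℕ} (I : Finset (Fin m)) (i : Fin m) :
    pfun I (fun j => decide (j = i)) = decide (i ∈ I) := by
  classical
  have hf : (I.filter fun j => decide (j = i) = true) = I.filter fun j => j = i := by
    apply Finset.filter_congr
    intro j _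
    simp
  by_cases hi : i ∈ I <;>
    simp [pfun, hf, Finset.filter_eq', hi, Nat.odd_iff]

lemma pfun_injective {m : ℕ} : Function.Injective (pfun (m := m)) := by
  intro I J h
  ext i
  have h2 := congrArg (fun C => C (fun j => decide (j = i))) h
  simp only [pfun_basis] at h2
  exact decide_eq_decide.mp h2

lemma hammingDist_update_le {m : ℕ} (x : Fin m → Bool) (i : Fin m) :
    hammingDist x (Function.update x i (!x i)) ≤ 1 := by
  classical
  rw [hammingDist]
  calc (Finset.univ.filter fun j => x j ≠ Function.update x i (!x i) j).card
      ≤ ({i} : Finset (Fin m)).card := by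
        apply Finset.card_le_card
        intro j hj
        simp only [Finset.mem_filter, Finset.mem_univ, true_and] at hj
        simp only [Finset.mem_singleton]
        by_contra hji
        exact hj (by rw [Function.update_of_ne hji])
    _ = 1 := Finset.card_singleton i

lemma update_mem_CSmin {m : ℕ} (I : Finset (Fin m)) {i : Fin m} (hi : i ∈ I) (x : Fin m → Bool) :
    Function.update x i (!x i) ∈
      CSmin (fun a b => ((hammingDist a b : ℕ) : ℝ≥0)) x (pfun I) := by
  constructor
  · rw [pfun_update I hi]
    simp
  · intro x'' hne
    have hx'' : x ≠ x'' := fun h => hne (by rw [← h])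
    have h1 : 1 ≤ hammingDist x x'' := hammingDist_pos.mpr hx''
    have h2 : hammingDist x (Function.update x i (!x i)) ≤ 1 := hammingDist_update_le x i
    change ((hammingDist x (Function.update x i (!x i)) : ℕ) : ℝ≥0) ≤
      ((hammingDist x x'' : ℕ) : ℝ≥0)
    exact Nat.cast_le.mpr (h2.trans h1)

lemma CSmin_eq_empty_iff {X : Type*} [Fintype X] (d : X → X → ℝ≥0) (x : X) (C : X → Bool) :
    CSmin d x C = ∅ ↔ ∀ x', C x' = C x := by
  classical
  constructor
  · intro h x'
    by_contra hne
    obtain ⟨x0, hx0, hmin⟩ := Finset.exists_min_image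
      (Finset.univ.filter fun y => C y ≠ C x) (d x) ⟨x', by simp [hne]⟩
    have hmem : x0 ∈ CSmin d x C :=
      ⟨(Finset.mem_filter.mp hx0).2, fun y hy => hmin y (by simp [hy])⟩
    rw [h] at hmem
    exact hmem
  · intro h
    ext y
    simp [CSmin, h y]

lemma parity_exists_close {m : ℕ} (I : Finset (Fin m)) (x : Fin m → Bool)
    (hne : ∃ x', pfun I x' ≠ pfun I x) :
    ∃ y, pfun I y ≠ pfun I x ∧ hammingDist x y ≤ 1 := by
  obtain ⟨x', hx'⟩ := hne
  have hI : I.Nonempty := by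
    by_contra h
    rw [Finset.not_nonempty_iff_eq_empty] at h
    subst h
    exact hx' (by simp [pfun])
  obtain ⟨i, hi⟩ := hI
  refine ⟨Function.update x i (!x i), ?_, hammingDist_update_le x i⟩
  rw [pfun_update I hi]
  simp

lemma min_card {m : ℕ} (i0 : Fin m) :
    ∀ (n : ℕ) (V : Set ((Fin m → Bool) → Bool)) (S : Finset ((Fin m → Bool) → Bool)),
      ↑S ⊆ V → (∀ C ∈ S, ∃ I : Finset (Fin m), i0 ∈ I ∧ C = pfun I) →
      Identifiable (id : (Fin m → Bool) → (Fin m → Bool))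
        (fun x C _ => CSmin (fun a b => ((hammingDist a b : ℕ) : ℝ≥0)) x C) n V →
      S.card ≤ 2 ^ n := by
  intro n
  induction n with
  | zero =>
    intro V S hSV hP hI
    simpa using Finset.card_le_one.mpr fun a ha b hb => hI (hSV ha) (hSV hb)
  | succ n ih =>
    intro V S hSV hP hI
    classical
    rcases hI with hss | ⟨x, hx⟩
    · calc S.card ≤ 1 := Finset.card_le_one.mpr fun a ha b hb => hss (hSV ha) (hSV hb)
        _ ≤ 2 ^ (n + 1) := Nat.one_le_two_pow
    · have key : ∀ b : Bool, (S.filter (fun C => C x = b)).card ≤ 2 ^ n := by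
        intro b
        rcases (S.filter (fun C => C x = b)).eq_empty_or_nonempty with he | ⟨Cs, hCs⟩
        · simp [he]
        · have hCsf := Finset.mem_filter.mp hCs
          obtain ⟨Is, hi0s, hCse⟩ := hP Cs hCsf.1
          have hx'mem : Function.update x i0 (!x i0) ∈
              CSmin (fun a b => ((hammingDist a b : ℕ) : ℝ≥0)) x Cs := by
            rw [hCse]; exact update_mem_CSmin Is hi0s x
          have h2 := (hx Cs (hSV hCsf.1)).2 _ hx'mem
          refine ih _ _ (fun C hC => ?_) (fun C hC => hP C (Finset.mem_filter.mp hC).1) h2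
          have hCf := Finset.mem_filter.mp hC
          obtain ⟨I, hi0, hCe⟩ := hP C hCf.1
          refine ⟨hSV hCf.1, ?_, ?_, ?_⟩
          · show C x = Cs x
            rw [hCf.2, hCsf.2]
          · rw [hCe]
            exact update_mem_CSmin I hi0 x
          · rw [hCe, pfun_update I hi0, ← hCe, hCf.2, hCse, pfun_update Is hi0s, ← hCse, hCsf.2]
      have hfe : S.filter (fun a => ¬ a x = true) = S.filter (fun C => C x = false) := by
        apply Finset.filter_congr
        intro C _
        simp
      have hsplit := Finset.card_filter_add_card_filter_not (s := S)
        (p := fun C => C x = true)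
      rw [hfe] at hsplit
      have h1 := key true
      have h2 := key false
      rw [pow_succ, ← hsplit, mul_two]
      exact Nat.add_le_add h1 h2

section Cube
variable {m : ℕ}

/-- Abbreviation for the Hamming distance cast to `ℝ≥0`. -/
local notation "dH" => (fun a b => ((hammingDist a b : ℕ) : ℝ≥0) : (Fin m → Bool) → (Fin m → Bool) → ℝ≥0)

lemma one_le_dH {x y : Fin m → Bool} (h : x ≠ y) : (1 : ℝ≥0) ≤ dH x y := by
  have := hammingDist_pos.mpr h
  exact_mod_cast Nat.one_le_cast.mpr this

lemma CSprox_one_subset_CSmin (x : Fin m → Bool) (C : (Fin m → Bool) → Bool) :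
    CSprox dH x 1 C ⊆ CSmin dH x C := by
  rintro x' ⟨hne, hle⟩
  refine ⟨hne, fun x'' hne'' => ?_⟩
  have hx'' : x ≠ x'' := fun h => hne'' (by rw [← h])
  exact hle.trans (one_le_dH hx'')

lemma CSprox_lt_one_empty (x : Fin m → Bool) (r : ℝ≥0) (hr : r < 1)
    (C : (Fin m → Bool) → Bool) : CSprox dH x r C = ∅ := by
  ext x'
  simp only [CSprox, Set.mem_setOf_eq, Set.mem_empty_iff_false, iff_false, not_and]
  intro hne hle
  have hx' : x ≠ x' := fun h => hne (by rw [← h])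
  exact absurd ((one_le_dH hx').trans hle) (not_le.mpr hr)

lemma CSmin_subset_CSprox (I : Finset (Fin m)) (x : Fin m → Bool) {r : ℝ≥0} (hr : 1 ≤ r) :
    CSmin dH x (pfun I) ⊆ CSprox dH x r (pfun I) := by
  rintro x' ⟨hne, hmin⟩
  refine ⟨hne, ?_⟩
  obtain ⟨y, hy, hyd⟩ := parity_exists_close I x ⟨x', hne⟩
  have h1 : dH x y ≤ 1 := by exact_mod_cast Nat.cast_le.mpr hyd
  exact ((hmin y hy).trans h1).trans hr

lemma CSmin_empty_CSprox_empty (C : (Fin m → Bool) → Bool) (x : Fin m → Bool) (r : ℝ≥0)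
    (h : CSmin dH x C = ∅) : CSprox dH x r C = ∅ := by
  have hall := (CSmin_eq_empty_iff dH x C).mp h
  ext x'
  simp [CSprox, hall x']

lemma CSprox_one_empty_CSmin_empty (I : Finset (Fin m)) (x : Fin m → Bool)
    (h : CSprox dH x 1 (pfun I) = ∅) : CSmin dH x (pfun I) = ∅ := by
  rw [CSmin_eq_empty_iff]
  intro x'
  by_contra hne
  obtain ⟨y, hy, hyd⟩ := parity_exists_close I x ⟨x', hne⟩
  have : y ∈ CSprox dH x 1 (pfun I) := ⟨hy, by exact_mod_cast Nat.cast_le.mpr hyd⟩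
  rw [h] at this
  exact this

lemma identifiable_min_iff_prox (k : ℕ) :
    Identifiable (id : (Fin m → Bool) → _) (fun x C _ => CSmin dH x C) k (parityClass m) ↔
    Identifiable (Prod.fst : (Fin m → Bool) × ℝ≥0 → _) (fun q C _ => CSprox dH q.1 q.2 C) k
      (parityClass m) := by
  constructor
  · intro h
    refine Identifiable_sim Prod.fst id (fun q C => CSprox dH q.1 q.2 C)
      (fun x C => CSmin dH x C) (parityClass m) (fun q2 => ⟨(q2, 1), rfl, Or.inr ?_⟩)
      k _ _ subset_rfl subset_rfl h
    rintro C ⟨I, rfl⟩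
    exact ⟨CSprox_one_subset_CSmin q2 (pfun I),
      fun he => CSprox_one_empty_CSmin_empty I q2 he⟩
  · intro h
    refine Identifiable_sim id Prod.fst (fun x C => CSmin dH x C)
      (fun q C => CSprox dH q.1 q.2 C) (parityClass m) (fun q2 => ⟨q2.1, rfl, ?_⟩)
      k _ _ subset_rfl subset_rfl h
    rcases lt_or_ge q2.2 1 with hr | hr
    · exact Or.inl fun C _ => CSprox_lt_one_empty q2.1 q2.2 hr C
    · refine Or.inr ?_
      rintro C ⟨I, rfl⟩
      exact ⟨CSmin_subset_CSprox I q2.1 hr,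
        fun he => CSmin_empty_CSprox_empty (pfun I) q2.1 q2.2 he⟩

lemma identifiable_min_of_mq (k : ℕ) (V : Set ((Fin m → Bool) → Bool))
    (h : Identifiable (id : (Fin m → Bool) → _) (fun _ _ _ => (∅ : Set (Fin m → Bool))) k V) :
    Identifiable (id : (Fin m → Bool) → _) (fun x C _ => CSmin dH x C) k V :=
  Identifiable_sim id id (fun x C => CSmin dH x C) (fun _ _ => ∅) Set.univ
    (fun q2 => ⟨q2, rfl, Or.inl fun _ _ => rfl⟩) k V V subset_rfl (Set.subset_univ V) h

end Cube

/-- For every `m ≥ 1`, the parity class over `{0,1}^m` satisfies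
`S[MQ] = m`, `S^d_min = S^d_prox`, and `m − 1 ≤ S^d_min ≤ m`, with `d` the Hamming
distance. -/
theorem statement9 (m : ℕ) (hm : 1 ≤ m) :
    SMQ (parityClass m) = (m : ℕ∞) ∧
    Smin (fun a b => ((hammingDist a b : ℕ) : ℝ≥0)) (parityClass m) = Sprox (fun a b => ((hammingDist a b : ℕ) : ℝ≥0)) (parityClass m) ∧
    (m : ℕ∞) - 1 ≤ Smin (fun a b => ((hammingDist a b : ℕ) : ℝ≥0)) (parityClass m) ∧
    Smin (fun a b => ((hammingDist a b : ℕ) : ℝ≥0)) (parityClass m) ≤ (m : ℕ∞) := by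
  classical
  -- MQ upper bound
  have hmq : Identifiable (id : (Fin m → Bool) → _)
      (fun _ _ _ => (∅ : Set (Fin m → Bool))) m (parityClass m) := by
    have hlist := Identifiable_mq_list
      ((List.finRange m).map (fun i => fun j => decide (j = i))) (parityClass m) ?_
    · simpa using hlist
    · rintro C ⟨I, rfl⟩ C' ⟨J, rfl⟩ hagree
      have hIJ : I = J := by
        ext i
        have hmem : (fun j => decide (j = i)) ∈
            (List.finRange m).map (fun i => fun j => decide (j = i)) :=
          List.mem_map.mpr ⟨i, List.mem_finRange i, rfl⟩
        have h3 : pfun I (fun j => decide (j = i)) = pfun J (fun j => decide (j = i)) :=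
          hagree _ hmem
        rw [pfun_basis, pfun_basis] at h3
        exact decide_eq_decide.mp h3
      rw [hIJ]
  -- MQ lower bound
  have hmqlb : ∀ k : ℕ, Identifiable (id : (Fin m → Bool) → _)
      (fun _ _ _ => (∅ : Set (Fin m → Bool))) k (parityClass m) → m ≤ k := by
    intro k hk
    have hS : ((Finset.univ.image (pfun (m := m))) : Set ((Fin m → Bool) → Bool))
        ⊆ parityClass m := by
      intro C hC
      obtain ⟨I, -, rfl⟩ := Finset.mem_image.mp (Finset.mem_coe.mp hC)
      exact ⟨I, rfl⟩
    have hcard := mq_card k (parityClass m) (Finset.univ.image pfun) hS hk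
    rw [Finset.card_image_of_injective _ pfun_injective, Finset.card_univ,
      Fintype.card_finset, Fintype.card_fin] at hcard
    exact (Nat.pow_le_pow_iff_right (by norm_num)).mp hcard
  have hSMQ : SMQ (parityClass m) = (m : ℕ∞) := by
    apply le_antisymm
    · exact sInf_le ⟨m, rfl, hmq⟩
    · refine le_sInf ?_
      rintro n ⟨k, rfl, hk⟩
      exact_mod_cast hmqlb k hk
  -- Smin upper bound
  have hminub : Smin (fun a b => ((hammingDist a b : ℕ) : ℝ≥0)) (parityClass m) ≤ (m : ℕ∞) :=
    sInf_le ⟨m, rfl, identifiable_min_of_mq m _ hmq⟩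
  -- Smin lower bound
  have i0 : Fin m := ⟨0, hm⟩
  have hminlb : ∀ k : ℕ, Identifiable (id : (Fin m → Bool) → _)
      (fun x C _ => CSmin (fun a b => ((hammingDist a b : ℕ) : ℝ≥0)) x C) k (parityClass m) →
      m - 1 ≤ k := by
    intro k hk
    set S := ((Finset.univ.erase i0).powerset).image (fun J => pfun (insert i0 J)) with hS
    have hinj : Set.InjOn (fun J => pfun (m := m) (insert i0 J))
        ↑((Finset.univ.erase i0).powerset) := by
      intro J hJ J' hJ' h
      have hJs : J ⊆ Finset.univ.erase i0 := Finset.mem_powerset.mp (Finset.mem_coe.mp hJ)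
      have hJ's : J' ⊆ Finset.univ.erase i0 := Finset.mem_powerset.mp (Finset.mem_coe.mp hJ')
      have hi0J : i0 ∉ J := fun hmem => absurd (hJs hmem) (by simp)
      have hi0J' : i0 ∉ J' := fun hmem => absurd (hJ's hmem) (by simp)
      have hins : insert i0 J = insert i0 J' := pfun_injective h
      calc J = (insert i0 J).erase i0 := (Finset.erase_insert hi0J).symm
        _ = (insert i0 J').erase i0 := by rw [hins]
        _ = J' := Finset.erase_insert hi0J'
    have hcardS : S.card = 2 ^ (m - 1) := by
      rw [hS, Finset.card_image_of_injOn hinj, Finset.card_powerset,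
        Finset.card_erase_of_mem (Finset.mem_univ i0), Finset.card_univ, Fintype.card_fin]
    have hprop : ∀ C ∈ S, ∃ I : Finset (Fin m), i0 ∈ I ∧ C = pfun I := by
      intro C hC
      rw [hS] at hC
      obtain ⟨J, -, rfl⟩ := Finset.mem_image.mp hC
      exact ⟨insert i0 J, Finset.mem_insert_self i0 J, rfl⟩
    have hsub : ↑S ⊆ parityClass m := by
      intro C hC
      obtain ⟨I, -, rfl⟩ := hprop C (Finset.mem_coe.mp hC)
      exact ⟨I, rfl⟩
    have hfin := min_card i0 k (parityClass m) S hsub hprop hk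
    rw [hcardS] at hfin
    exact (Nat.pow_le_pow_iff_right (by norm_num)).mp hfin
  have hminlb' : (m : ℕ∞) - 1 ≤
      Smin (fun a b => ((hammingDist a b : ℕ) : ℝ≥0)) (parityClass m) := by
    refine le_sInf ?_
    rintro n ⟨k, rfl, hk⟩
    have h1 : m - 1 ≤ k := hminlb k hk
    calc (m : ℕ∞) - 1 = ((m - 1 : ℕ) : ℕ∞) := by
          rw [ENat.coe_sub, Nat.cast_one]
      _ ≤ (k : ℕ∞) := Nat.cast_le.mpr h1
  -- Smin = Sprox
  have heq : Smin (fun a b => ((hammingDist a b : ℕ) : ℝ≥0)) (parityClass m) =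
      Sprox (fun a b => ((hammingDist a b : ℕ) : ℝ≥0)) (parityClass m) := by
    unfold Smin Sprox sampleComplexity
    congr 1
    ext n
    simp only [Set.mem_setOf_eq]
    constructor
    · rintro ⟨k, rfl, hk⟩
      exact ⟨k, rfl, (identifiable_min_iff_prox k).mp hk⟩
    · rintro ⟨k, rfl, hk⟩
      exact ⟨k, rfl, (identifiable_min_iff_prox k).mpr hk⟩
  exact ⟨hSMQ, heq, hminlb', hminub⟩
end

section
/- Let X be a finite set and 𝒞 a concept class over X. For every function d : X × X → ℝ≥0, S^d_min(𝒞) ≤ S^{d₀}_min(𝒞), where d₀ is the discrete metric on X; that is, among all choices of d, the minimum-distance contrast sample complexity is maximized by the discrete metric. -/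
open scoped NNReal

lemma identifiable_mono_s10 {X Q : Type*} (pt : Q → X)
    (CS CS' : Q → (X → Bool) → Set X)
    (hsub : ∀ q C, CS' q C ⊆ CS q C)
    (hemp : ∀ q C, CS' q C = ∅ → CS q C = ∅) :
    ∀ n (V V' : Set (X → Bool)), V' ⊆ V →
      Identifiable pt (fun q C _ => CS q C) n V →
      Identifiable pt (fun q C _ => CS' q C) n V' := by
  intro n
  induction n with
  | zero => intro V V' hVV h; exact h.anti hVV
  | succ n ih =>
    intro V V' hVV h
    rcases h with h | ⟨q, hq⟩
    · exact Or.inl (h.anti hVV)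
    · right
      refine ⟨q, fun Cstar hC => ?_⟩
      have hC' := hq Cstar (hVV hC)
      constructor
      · intro he
        refine ih _ _ ?_ (hC'.1 (hemp q Cstar he))
        intro C hCmem
        exact ⟨hVV hCmem.1, hCmem.2.1, hemp q C hCmem.2.2⟩
      · intro x' hx'
        refine ih _ _ ?_ (hC'.2 x' (hsub q Cstar hx'))
        intro C hCmem
        exact ⟨hVV hCmem.1, hCmem.2.1, hsub q C hCmem.2.2.1, hCmem.2.2.2⟩

/-- Over a finite domain, for every `d : X × X → ℝ≥0`, the
minimum-distance sample complexity w.r.t. `d` is at most the one w.r.t. the discrete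
metric `d₀` (so `d₀` maximizes the minimum-distance contrast sample complexity). -/
theorem statement10 {X : Type*} [Fintype X] [DecidableEq X]
    (𝓒 : Set (X → Bool)) (d : X → X → ℝ≥0) :
    Smin d 𝓒 ≤ Smin (fun x x' => if x = x' then 0 else 1) 𝓒 := by
  set d0 : X → X → ℝ≥0 := fun x x' => if x = x' then 0 else 1 with hd0
  have hsub : ∀ (x : X) (C : X → Bool), CSmin d x C ⊆ CSmin d0 x C := by
    intro x C x' hx'
    refine ⟨hx'.1, fun x'' hx'' => ?_⟩
    have hxx' : x ≠ x' := fun h => hx'.1 (h ▸ rfl)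
    have hxx'' : x ≠ x'' := fun h => hx'' (h ▸ rfl)
    simp [d0, hxx', hxx'']
  have hemp : ∀ (x : X) (C : X → Bool), CSmin d x C = ∅ → CSmin d0 x C = ∅ := by
    intro x C he
    by_contra hne
    rcases Set.nonempty_iff_ne_empty.mpr hne with ⟨x', hx'⟩
    -- there is an opposite-label point, so CSmin d x C is nonempty
    have hfil : x' ∈ Finset.univ.filter (fun y => C y ≠ C x) := by
      simp [hx'.1]
    obtain ⟨y, hy, hymin⟩ := Finset.exists_min_image
      (Finset.univ.filter (fun y => C y ≠ C x)) (fun y => d x y) ⟨x', hfil⟩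
    have : y ∈ CSmin d x C := by
      refine ⟨(Finset.mem_filter.mp hy).2, fun z hz => ?_⟩
      exact hymin z (by simp [hz])
    rw [he] at this
    exact this
  unfold Smin sampleComplexity
  apply sInf_le_sInf
  rintro n ⟨k, rfl, hk⟩
  refine ⟨k, rfl, ?_⟩
  exact identifiable_mono_s10 (id : X → X) (fun x C => CSmin d0 x C)
    (fun x C => CSmin d x C) hsub hemp k 𝓒 𝓒 subset_rfl hk
end

section
/- Let X be a finite set and 𝒞 a concept class over X. Then S[EX+, EX−, MQ](𝒞) − 2 ≤ S^{d₀}_min(𝒞) ≤ S[EX+, EX−, MQ](𝒞), where d₀ is the discrete metric on X. -/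
open scoped NNReal

/-- The interaction game for learning with the three oracles `EX+`, `EX−` and `MQ`:
`IdentifiableEXM n V` holds iff some learner can guarantee, within at most `n` oracle
calls, that the version space (starting from `V`) becomes a subsingleton, for every
target in `V` and adversarial oracle answers.  In each round the learner either
(i) membership-queries a point `x` and learns its label, or (ii) calls `EX+`, which
adversarially returns some positive instance of the target (or reveals that none
exists), or (iii) calls `EX−`, dually. -/
def IdentifiableEXM {X : Type*} : ℕ → Set (X → Bool) → Prop
  | 0, V => V.Subsingleton
  | n + 1, V =>
      V.Subsingleton ∨
      (∃ x : X, ∀ Cstar ∈ V,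
        IdentifiableEXM n {C ∈ V | C x = Cstar x}) ∨
      (∀ Cstar ∈ V,
        ((∀ x, Cstar x = false) →
          IdentifiableEXM n {C ∈ V | ∀ x, C x = false}) ∧
        (∀ x, Cstar x = true →
          IdentifiableEXM n {C ∈ V | C x = true})) ∨
      (∀ Cstar ∈ V,
        ((∀ x, Cstar x = true) →
          IdentifiableEXM n {C ∈ V | ∀ x, C x = true}) ∧
        (∀ x, Cstar x = false →
          IdentifiableEXM n {C ∈ V | C x = false}))

/-- `S[EX+, EX−, MQ](𝓒)`: the least total number of oracle calls with which some
learner identifies every target of `𝓒` against adversarial answers. -/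
noncomputable def SEXM {X : Type*} (𝓒 : Set (X → Bool)) : ℕ∞ :=
  sInf {n : ℕ∞ | ∃ k : ℕ, n = (k : ℕ∞) ∧ IdentifiableEXM k 𝓒}

section Aux

variable {X : Type*} [DecidableEq X]

set_option linter.unusedSectionVars false

/-- The min-distance contrast game with the discrete metric. -/
abbrev IdM (n : ℕ) (V : Set (X → Bool)) : Prop :=
  Identifiable (id : X → X)
    (fun x C _ => CSmin (fun a b => if a = b then (0 : ℝ≥0) else 1) x C) n V

lemma mem_csmin_d0 {x x' : X} {C : X → Bool} :
    x' ∈ CSmin (fun a b => if a = b then (0 : ℝ≥0) else 1) x C ↔ C x' ≠ C x := by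
  constructor
  · exact fun h => h.1
  · intro h
    refine ⟨h, fun x'' hx'' => ?_⟩
    have h1 : ¬ x = x' := by rintro rfl; exact h rfl
    have h2 : ¬ x = x'' := by rintro rfl; exact hx'' rfl
    simp [h1, h2]

lemma csmin_d0_empty {x : X} {C : X → Bool} :
    CSmin (fun a b => if a = b then (0 : ℝ≥0) else 1) x C = ∅ ↔ ∀ x', C x' = C x := by
  constructor
  · intro h x'
    by_contra hne
    exact Set.eq_empty_iff_forall_notMem.mp h x' (mem_csmin_d0.mpr hne)
  · intro h
    ext x'
    simp [mem_csmin_d0, h x']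

lemma exm_of_ss {V : Set (X → Bool)} (h : V.Subsingleton) :
    ∀ n, IdentifiableEXM n V := by
  intro n; cases n with
  | zero => exact h
  | succ n => exact Or.inl h

lemma idm_of_ss {V : Set (X → Bool)} (h : V.Subsingleton) :
    ∀ n, IdM n V := by
  intro n; cases n with
  | zero => exact h
  | succ n => exact Or.inl h

lemma exm_succ : ∀ n (V : Set (X → Bool)),
    IdentifiableEXM n V → IdentifiableEXM (n + 1) V := by
  intro n
  induction n with
  | zero => exact fun V h => Or.inl h
  | succ n ih =>
    intro V h
    rcases h with h | ⟨x, hx⟩ | h | h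
    · exact Or.inl h
    · exact Or.inr (Or.inl ⟨x, fun C hC => ih _ (hx C hC)⟩)
    · exact Or.inr (Or.inr (Or.inl (fun C hC =>
        ⟨fun h' => ih _ ((h C hC).1 h'), fun x h' => ih _ ((h C hC).2 x h')⟩)))
    · exact Or.inr (Or.inr (Or.inr (fun C hC =>
        ⟨fun h' => ih _ ((h C hC).1 h'), fun x h' => ih _ ((h C hC).2 x h')⟩)))

lemma idm_mono : ∀ n {V W : Set (X → Bool)}, W ⊆ V → IdM n V → IdM n W := by
  intro n
  induction n with
  | zero => exact fun hWV h => h.anti hWV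
  | succ n ih =>
    intro V W hWV h
    rcases h with h | ⟨q, hq⟩
    · exact Or.inl (h.anti hWV)
    · refine Or.inr ⟨q, fun C hC => ?_⟩
      refine ⟨fun hemp => ?_, fun x' hx' => ?_⟩
      · refine ih ?_ ((hq C (hWV hC)).1 hemp)
        intro D hD
        exact ⟨hWV hD.1, hD.2⟩
      · refine ih ?_ ((hq C (hWV hC)).2 x' hx')
        intro D hD
        exact ⟨hWV hD.1, hD.2⟩

end Aux
section Dir2
variable {X : Type*} [DecidableEq X]
set_option linter.unusedSectionVars false

lemma dir2 : ∀ n (V : Set (X → Bool)), IdentifiableEXM n V → IdM n V := by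
  intro n
  induction n with
  | zero => exact fun V h => h
  | succ n ih =>
    intro V h
    rcases h with h | ⟨x, hx⟩ | h | h
    · exact Or.inl h
    · -- membership query
      refine Or.inr ⟨x, fun Cs hCs => ⟨fun _ => ?_, fun x' _ => ?_⟩⟩
      · refine idm_mono n ?_ (ih _ (hx Cs hCs))
        intro D hD; exact ⟨hD.1, hD.2.1⟩
      · refine idm_mono n ?_ (ih _ (hx Cs hCs))
        intro D hD; exact ⟨hD.1, hD.2.1⟩
    · -- EX+
      by_cases hss : V.Subsingleton
      · exact Or.inl hss
      · obtain ⟨C₁, hC₁, C₂, hC₂, hne⟩ := Set.not_subsingleton_iff.mp hss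
        obtain ⟨x₀, hx₀⟩ := Function.ne_iff.mp hne
        refine Or.inr ⟨x₀, fun Cs hCs => ⟨fun hemp => ?_, fun x' hx' => ?_⟩⟩
        · -- ω answer : Cs is constant
          have hconst : ∀ x', Cs x' = Cs x₀ := csmin_d0_empty.mp hemp
          cases hv : Cs x₀ with
          | false =>
            refine idm_mono n ?_ (ih _ ((h Cs hCs).1 (fun x => by rw [hconst x, hv])))
            intro D hD
            refine ⟨hD.1, fun y => ?_⟩
            have h21 := hD.2.1
            simp only [id_eq] at h21
            have := csmin_d0_empty.mp hD.2.2 y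
            rw [this, h21, hv]
          | true =>
            refine idm_mono n ?_ (ih _ ((h Cs hCs).2 x₀ hv))
            intro D hD
            exact ⟨hD.1, by have h21 := hD.2.1; simp only [id_eq] at h21; rw [h21, hv]⟩
        · -- contrast point x'
          cases hv : Cs x₀ with
          | true =>
            refine idm_mono n ?_ (ih _ ((h Cs hCs).2 x₀ hv))
            intro D hD
            exact ⟨hD.1, by have h21 := hD.2.1; simp only [id_eq] at h21; rw [h21, hv]⟩
          | false =>
            have hx'pos : Cs x' = true := by
              have := mem_csmin_d0.mp hx'
              rw [hv] at this
              simpa using this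
            refine idm_mono n ?_ (ih _ ((h Cs hCs).2 x' hx'pos))
            intro D hD
            exact ⟨hD.1, by rw [hD.2.2.2, hx'pos]⟩
    · -- EX−
      by_cases hss : V.Subsingleton
      · exact Or.inl hss
      · obtain ⟨C₁, hC₁, C₂, hC₂, hne⟩ := Set.not_subsingleton_iff.mp hss
        obtain ⟨x₀, hx₀⟩ := Function.ne_iff.mp hne
        refine Or.inr ⟨x₀, fun Cs hCs => ⟨fun hemp => ?_, fun x' hx' => ?_⟩⟩
        · have hconst : ∀ x', Cs x' = Cs x₀ := csmin_d0_empty.mp hemp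
          cases hv : Cs x₀ with
          | true =>
            refine idm_mono n ?_ (ih _ ((h Cs hCs).1 (fun x => by rw [hconst x, hv])))
            intro D hD
            refine ⟨hD.1, fun y => ?_⟩
            have h21 := hD.2.1
            simp only [id_eq] at h21
            have := csmin_d0_empty.mp hD.2.2 y
            rw [this, h21, hv]
          | false =>
            refine idm_mono n ?_ (ih _ ((h Cs hCs).2 x₀ hv))
            intro D hD
            exact ⟨hD.1, by have h21 := hD.2.1; simp only [id_eq] at h21; rw [h21, hv]⟩
        · cases hv : Cs x₀ with
          | false =>
            refine idm_mono n ?_ (ih _ ((h Cs hCs).2 x₀ hv))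
            intro D hD
            exact ⟨hD.1, by have h21 := hD.2.1; simp only [id_eq] at h21; rw [h21, hv]⟩
          | true =>
            have hx'neg : Cs x' = false := by
              have := mem_csmin_d0.mp hx'
              rw [hv] at this
              simpa using this
            refine idm_mono n ?_ (ih _ ((h Cs hCs).2 x' hx'neg))
            intro D hD
            exact ⟨hD.1, by rw [hD.2.2.2, hx'neg]⟩

end Dir2
section Dir1
variable {X : Type*} [DecidableEq X]
set_option linter.unusedSectionVars false

/-- If a positive point `p` and a negative point `m` are known (common to all concepts
in the version space), then each contrast round can be simulated by one membership
query. -/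
lemma lemA : ∀ n (V : Set (X → Bool)) (p m : X),
    (∀ C ∈ V, C p = true) → (∀ C ∈ V, C m = false) →
    IdM n V → IdentifiableEXM n V := by
  intro n
  induction n with
  | zero => exact fun V p m _ _ h => h
  | succ n ih =>
    intro V p m hp hm h
    rcases h with hss | ⟨q, hq⟩
    · exact Or.inl hss
    · refine Or.inr (Or.inl ⟨q, fun Cs hCs => ?_⟩)
      set x' : X := if Cs q = true then m else p with hx'
      have hx'lab : Cs x' ≠ Cs q := by
        cases hCq : Cs q <;> simp [hx', hCq, hp Cs hCs, hm Cs hCs]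
      have h2 := (hq Cs hCs).2 x' (mem_csmin_d0.mpr hx'lab)
      have hSeq : {C ∈ V | C (id q) = Cs (id q) ∧
            x' ∈ CSmin (fun a b => if a = b then (0:ℝ≥0) else 1) q C ∧ C x' = Cs x'}
          = {C ∈ V | C q = Cs q} := by
        ext C
        simp only [Set.mem_setOf_eq, id_eq, mem_csmin_d0]
        constructor
        · rintro ⟨hCV, h1, -, -⟩
          exact ⟨hCV, h1⟩
        · rintro ⟨hCV, h1⟩
          refine ⟨hCV, h1, ?_, ?_⟩ <;>
            cases hCq : Cs q <;>
              simp_all [hx', hp C hCV, hm C hCV, hp Cs hCs, hm Cs hCs]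
      rw [hSeq] at h2
      exact ih _ p m (fun C hC => hp C hC.1) (fun C hC => hm C hC.1) h2

lemma dir1 : ∀ k (V : Set (X → Bool)), IdM k V → IdentifiableEXM (k + 2) V := by
  intro k V h
  cases k with
  | zero => exact exm_of_ss h _
  | succ k =>
    rcases h with hss | ⟨q, hq⟩
    · exact exm_of_ss hss _
    · -- round 1: membership query at q
      refine Or.inr (Or.inl ⟨q, fun Cs hCs => ?_⟩)
      -- goal : IdentifiableEXM (k + 2) {C ∈ V | C q = Cs q}
      cases hb : Cs q with
      | false =>
        -- round 2: EX+
        refine Or.inr (Or.inr (Or.inl (fun D hD => ⟨fun _ => ?_, fun x' hx' => ?_⟩)))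
        · -- adversary reveals target is all-false: version space is a subsingleton
          refine exm_of_ss ?_ _
          intro C₁ hC₁ C₂ hC₂
          funext y
          rw [hC₁.2 y, hC₂.2 y]
        · -- adversary returns a positive point x' : now p := x', m := q are known
          have hDq : D q = false := hD.2
          have hmem : x' ∈ CSmin (fun a b => if a = b then (0:ℝ≥0) else 1) q D :=
            mem_csmin_d0.mpr (by rw [hx', hDq]; simp)
          have h2 := (hq D hD.1).2 x' hmem
          have hSeq : {C ∈ V | C (id q) = D (id q) ∧
                x' ∈ CSmin (fun a b => if a = b then (0:ℝ≥0) else 1) q C ∧ C x' = D x'}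
              = {C ∈ {C ∈ V | C q = false} | C x' = true} := by
            ext C
            simp only [Set.mem_setOf_eq, id_eq, mem_csmin_d0]
            constructor
            · rintro ⟨hCV, h1, -, h3⟩
              exact ⟨⟨hCV, by rw [h1, hDq]⟩, by rw [h3, hx']⟩
            · rintro ⟨⟨hCV, h1⟩, h2⟩
              refine ⟨hCV, by rw [h1, hDq], ?_, by rw [h2, hx']⟩
              rw [h2, h1]; simp
          rw [hSeq] at h2
          refine exm_succ k _ (lemA k _ x' q ?_ ?_ h2)
          · exact fun C hC => hC.2
          · exact fun C hC => hC.1.2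
      | true =>
        -- round 2: EX−
        refine Or.inr (Or.inr (Or.inr (fun D hD => ⟨fun _ => ?_, fun x' hx' => ?_⟩)))
        · refine exm_of_ss ?_ _
          intro C₁ hC₁ C₂ hC₂
          funext y
          rw [hC₁.2 y, hC₂.2 y]
        · have hDq : D q = true := hD.2
          have hmem : x' ∈ CSmin (fun a b => if a = b then (0:ℝ≥0) else 1) q D :=
            mem_csmin_d0.mpr (by rw [hx', hDq]; simp)
          have h2 := (hq D hD.1).2 x' hmem
          have hSeq : {C ∈ V | C (id q) = D (id q) ∧
                x' ∈ CSmin (fun a b => if a = b then (0:ℝ≥0) else 1) q C ∧ C x' = D x'}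
              = {C ∈ {C ∈ V | C q = true} | C x' = false} := by
            ext C
            simp only [Set.mem_setOf_eq, id_eq, mem_csmin_d0]
            constructor
            · rintro ⟨hCV, h1, -, h3⟩
              exact ⟨⟨hCV, by rw [h1, hDq]⟩, by rw [h3, hx']⟩
            · rintro ⟨⟨hCV, h1⟩, h2⟩
              refine ⟨hCV, by rw [h1, hDq], ?_, by rw [h2, hx']⟩
              rw [h2, h1]; simp
          rw [hSeq] at h2
          refine exm_succ k _ (lemA k _ q x' ?_ ?_ h2)
          · exact fun C hC => hC.1.2
          · exact fun C hC => hC.2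

end Dir1

/-- Over a finite domain, with `d₀` the discrete metric,
`S[EX+, EX−, MQ](𝓒) − 2 ≤ S^{d₀}_min(𝓒) ≤ S[EX+, EX−, MQ](𝓒)`. -/
theorem statement11 {X : Type*} [Fintype X] [DecidableEq X] (𝓒 : Set (X → Bool)) :
    SEXM 𝓒 - 2 ≤ Smin (fun x x' => if x = x' then 0 else 1) 𝓒 ∧
    Smin (fun x x' => if x = x' then 0 else 1) 𝓒 ≤ SEXM 𝓒 := by
  constructor
  · -- SEXM − 2 ≤ Smin
    refine le_sInf ?_
    rintro n ⟨k, rfl, hk⟩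
    have h1 : IdentifiableEXM (k + 2) 𝓒 := dir1 k 𝓒 hk
    have h2 : SEXM 𝓒 ≤ ((k : ℕ∞) + 2) := by
      refine sInf_le ⟨k + 2, ?_, h1⟩
      push_cast
      ring
    exact tsub_le_iff_right.mpr h2
  · -- Smin ≤ SEXM
    refine sInf_le_sInf ?_
    rintro n ⟨k, rfl, hk⟩
    exact ⟨k, rfl, dir2 k 𝓒 hk⟩
end
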